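/- arXiv:1106.5439 — 10 statements merged into one kernel-verified Lean document; each statement's English description precedes it below -/
import Mathlib

section
/- Let N ≥ 1 and let φ be a Laurent polynomial containing only negative powers z^{-1},...,z^{-N}, and let α, β be polynomials of degree at most N in z (nonnegative powers). If the 2×2 matrix product [[1,0],[φ,1]]·[[α,β],[-β̃,α̃]] has all entries that are polynomials in nonnegative powers of z (where p̃(z) denotes the conjugate-reflected polynomial Σ c̄_k z^{-k} for p(z)=Σ c_k z^k), then α(z)α̃(z) + β(z)β̃(z) is a constant function on ℂ\{0}. -/
/-!
The second row of the product is `(φα - β̃, φβ + α̃)`, so `F = αα̃ + ββ̃ = α(φβ + α̃) - β(φα - β̃)`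
agrees on `ℂ \ {0}` with a polynomial `P`. On the other hand `F(1/z̄) = conj (F z)`, i.e.
`P(z) = P*(1/z)` with `P*` the polynomial with conjugated coefficients. Comparing `z^d P(z)` with the
reflection of `P*` at `d = deg P*` shows `deg P = 0`.
-/

open Complex Finset Matrix

/-- Evaluation of the polynomial `∑_{k=0}^N a_k z^k` (element of `P⁺_N`). -/
noncomputable def pEval {N : ℕ} (a : Fin (N + 1) → ℂ) (z : ℂ) : ℂ :=
  ∑ k : Fin (N + 1), a k * z ^ (k : ℕ)

/-- Evaluation of `p̃(z) = ∑_{k=0}^N conj(a_k) z^{-k}`. -/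
noncomputable def pTilde {N : ℕ} (a : Fin (N + 1) → ℂ) (z : ℂ) : ℂ :=
  ∑ k : Fin (N + 1), (starRingEnd ℂ) (a k) * z⁻¹ ^ (k : ℕ)

/-- Evaluation of `φ(z) = ∑_{k=1}^N γ_k z^{-k}` (element of `P⁻_N`). -/
noncomputable def nEval {N : ℕ} (g : Fin N → ℂ) (z : ℂ) : ℂ :=
  ∑ k : Fin N, g k * z⁻¹ ^ ((k : ℕ) + 1)

/-- A function on `ℂ \ {0}` that coincides with a polynomial in nonnegative powers of `z`. -/
def IsPolyFun (f : ℂ → ℂ) : Prop :=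
  ∃ p : Polynomial ℂ, ∀ z : ℂ, z ≠ 0 → f z = p.eval z

namespace Polynomial

theorem natDegree_eq_zero_of_eval_eq_eval_inv {K : Type*} [Field K] [Infinite K]
    {p q : K[X]} (h : ∀ z ≠ 0, p.eval z = q.eval z⁻¹) : p.natDegree = 0 := by
  set d := q.natDegree
  have hreflect : reflect d q = X ^ d * p := by
    refine eq_of_infinite_eval_eq _ _ <|
      (Set.finite_singleton (0 : K)).infinite_compl.mono fun z (hz : z ≠ 0) => ?_
    let _ := invertibleOfNonzero (inv_ne_zero hz)
    have hz' := eval₂_reflect_mul_pow (RingHom.id K) z⁻¹ d q le_rfl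
    rw [invOf_eq_inv, inv_inv] at hz'
    change eval z (reflect d q) * z⁻¹ ^ d = eval z⁻¹ q at hz'
    rw [← h z hz] at hz'
    rw [Set.mem_ofPred_eq, eval_mul, eval_X_pow, ← hz', mul_left_comm, ← mul_pow,
      mul_inv_cancel₀ hz, one_pow, mul_one]
  rcases eq_or_ne p 0 with rfl | hp
  · exact natDegree_zero
  have hdeg : (reflect d q).natDegree ≤ d := natDegree_reflect_le.trans (max_self d).le
  rw [hreflect, natDegree_mul (pow_ne_zero d X_ne_zero) hp, natDegree_X_pow] at hdeg
  omega

end Polynomial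

open Polynomial ComplexConjugate

namespace IsPolyFun

theorem congr {f g : ℂ → ℂ} (hf : IsPolyFun f) (h : ∀ z ≠ 0, f z = g z) : IsPolyFun g :=
  let ⟨p, hp⟩ := hf
  ⟨p, fun z hz => (h z hz).symm.trans (hp z hz)⟩

theorem mul {f g : ℂ → ℂ} (hf : IsPolyFun f) (hg : IsPolyFun g) : IsPolyFun (f * g) :=
  let ⟨p, hp⟩ := hf
  let ⟨q, hq⟩ := hg
  ⟨p * q, fun z hz => by rw [Pi.mul_apply, hp z hz, hq z hz, eval_mul]⟩

theorem sub {f g : ℂ → ℂ} (hf : IsPolyFun f) (hg : IsPolyFun g) : IsPolyFun (f - g) :=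
  let ⟨p, hp⟩ := hf
  let ⟨q, hq⟩ := hg
  ⟨p - q, fun z hz => by rw [Pi.sub_apply, hp z hz, hq z hz, eval_sub]⟩

theorem exists_const_of_conj_inv {f : ℂ → ℂ} (hf : IsPolyFun f)
    (hsymm : ∀ z, f (conj z)⁻¹ = conj (f z)) : ∃ c : ℂ, ∀ z ≠ 0, f z = c := by
  obtain ⟨p, hp⟩ := hf
  have hrefl : ∀ z ≠ 0, p.eval z = (p.map (starRingEnd ℂ)).eval z⁻¹ := fun z hz => by
    have hz' : (conj z)⁻¹ ≠ 0 := by simpa using hz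
    rw [← hp z hz, ← conj_conj (f z), ← hsymm, hp _ hz', eval_map, eval, hom_eval₂, map_inv₀,
      conj_conj]
    rfl
  obtain ⟨c, hc⟩ := natDegree_eq_zero.mp (natDegree_eq_zero_of_eval_eq_eval_inv hrefl)
  exact ⟨c, fun z hz => by rw [hp z hz, ← hc, eval_C]⟩

end IsPolyFun

theorem isPolyFun_pEval {N : ℕ} (a : Fin (N + 1) → ℂ) : IsPolyFun (pEval a) :=
  ⟨∑ k : Fin (N + 1), C (a k) * X ^ (k : ℕ), fun z _ => by
    simp [pEval, eval_finsetSum]⟩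

theorem pEval_conj_inv {N : ℕ} (a : Fin (N + 1) → ℂ) (z : ℂ) :
    pEval a (conj z)⁻¹ = conj (pTilde a z) := by
  simp [pEval, pTilde, map_sum]

theorem pTilde_conj_inv {N : ℕ} (a : Fin (N + 1) → ℂ) (z : ℂ) :
    pTilde a (conj z)⁻¹ = conj (pEval a z) := by
  simp [pEval, pTilde, map_sum]

theorem daubechies_lemma1_general (N : ℕ) (g : Fin N → ℂ)
    (a b : Fin (N + 1) → ℂ)
    (h : ∀ i j : Fin 2, IsPolyFun (fun z =>
      ((!![(1 : ℂ), 0; nEval g z, 1] : Matrix (Fin 2) (Fin 2) ℂ) *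
        !![pEval a z, pEval b z; -pTilde b z, pTilde a z]) i j)) :
    ∃ c : ℂ, ∀ z : ℂ, z ≠ 0 →
      pEval a z * pTilde a z + pEval b z * pTilde b z = c := by
  have hF : IsPolyFun fun z => pEval a z * pTilde a z + pEval b z * pTilde b z := by
    refine (((isPolyFun_pEval a).mul (h 1 1)).sub ((isPolyFun_pEval b).mul (h 1 0))).congr
      fun z _ => ?_
    simp only [Pi.sub_apply, Pi.mul_apply, Matrix.mul_apply, Fin.sum_univ_two, of_apply,
      cons_val', cons_val_fin_one, cons_val_zero, cons_val_one, one_mul, mul_neg]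
    ring
  refine hF.exists_const_of_conj_inv fun z => ?_
  simp only [pEval_conj_inv, pTilde_conj_inv, map_add, map_mul]
  ring

/-- Lemma 1: if all entries of `[[1,0],[φ,1]]·[[α,β],[-β̃,α̃]]` contain only nonnegative
powers of `z`, then `α α̃ + β β̃` is constant on `ℂ \ {0}`. -/
theorem daubechies_lemma1 (N : ℕ) (hN : 1 ≤ N) (g : Fin N → ℂ)
    (a b : Fin (N + 1) → ℂ)
    (h : ∀ i j : Fin 2, IsPolyFun (fun z =>
      ((!![(1 : ℂ), 0; nEval g z, 1] : Matrix (Fin 2) (Fin 2) ℂ) *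
        !![pEval a z, pEval b z; -pTilde b z, pTilde a z]) i j)) :
    ∃ c : ℂ, ∀ z : ℂ, z ≠ 0 →
      pEval a z * pTilde a z + pEval b z * pTilde b z = c :=
  daubechies_lemma1_general N g a b h
end

section
/- Let N ≥ 1 and let φ ∈ P^-_N be a nonzero Laurent polynomial with only negative powers of z. Then there exists a unique pair of polynomials α, β ∈ P^+_N (nonnegative powers up to degree N) such that (i) α(z)α̃(z) + β(z)β̃(z) = 1 for all z ∈ ℂ\{0}, (ii) α(1) = 1 and β(1) = 0, and (iii) all entries of the matrix [[1,0],[φ,1]]·[[α,β],[-β̃,α̃]] are polynomials in nonnegative powers of z. -/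
open Complex Finset Matrix

/-!
Conditions (ii) and (iii) are real-linear in the coefficients of `α` and `β`. With `A`, `B` the
polynomials of `α`, `β` and `Φ = z ^ N φ`, condition (iii) says that `X ^ N` divides
`Φ A - z ^ N β̃` and `Φ B + z ^ N α̃`: `4N` real equations, plus `4` from (ii), for `4(N + 1)` real
unknowns. So existence and uniqueness both follow once the homogeneous system has only the trivial
solution. Now `z ^ N (α α̃ + β β̃) = A (Φ B + z ^ N α̃) - B (Φ A - z ^ N β̃)` is divisible by
`X ^ N`, has degree at most `2N` and is invariant under conjugating and reflecting its coefficients, so it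
is `c X ^ N` with `c = ∑ |a_k|² + ∑ |b_k|²` its middle coefficient. Evaluating at `1` gives
`c = |α(1)|² + |β(1)|²`, which is `1` for a solution (hence (i)) and `0` for a solution of the
homogeneous system (hence `α = β = 0`).
-/

open Polynomial ComplexConjugate

namespace Polynomial

section OfFinCoeffs

variable {R : Type*} [CommSemiring R] {n : ℕ}

noncomputable def ofFinCoeffs (n : ℕ) : (Fin n → R) →ₗ[R] R[X] :=
  (degreeLT R n).subtype ∘ₗ (degreeLTEquiv R n).symm.toLinearMap

lemma ofFinCoeffs_apply (a : Fin n → R) : ofFinCoeffs n a = ∑ k : Fin n, monomial k (a k) :=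
  rfl

lemma coeff_ofFinCoeffs (a : Fin n → R) (k : Fin n) : (ofFinCoeffs n a).coeff k = a k :=
  congrFun ((degreeLTEquiv R n).apply_symm_apply a) k

lemma natDegree_ofFinCoeffs_le {N : ℕ} (a : Fin (N + 1) → R) :
    (ofFinCoeffs (N + 1) a).natDegree ≤ N := by
  have : ofFinCoeffs (N + 1) a ∈ degreeLE R N :=
    degreeLT_succ_eq_degreeLE (R := R) ▸ ((degreeLTEquiv R (N + 1)).symm a).2
  exact natDegree_le_iff_degree_le.mpr (mem_degreeLE.mp this)

lemma eval_ofFinCoeffs (a : Fin n → R) (z : R) :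
    (ofFinCoeffs n a).eval z = ∑ k : Fin n, a k * z ^ (k : ℕ) := by
  simp [ofFinCoeffs_apply, eval_finsetSum]

lemma map_ofFinCoeffs {S : Type*} [CommSemiring S] (f : R →+* S) (a : Fin n → R) :
    (ofFinCoeffs n a).map f = ofFinCoeffs n (f ∘ a) := by
  simp [ofFinCoeffs_apply, Polynomial.map_sum]

end OfFinCoeffs

lemma eval_reflect_of_ne_zero {K : Type*} [Field K] {N : ℕ} {p : K[X]} (hp : p.natDegree ≤ N)
    {z : K} (hz : z ≠ 0) : (reflect N p).eval z = z ^ N * p.eval z⁻¹ := by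
  let := invertibleOfNonzero (inv_ne_zero hz)
  have := eval₂_reflect_mul_pow (RingHom.id K) z⁻¹ N p hp
  rw [invOf_eq_inv, inv_inv] at this
  rw [eval, eval, ← this, mul_left_comm, ← mul_pow, mul_inv_cancel₀ hz, one_pow, mul_one]

section StarReflect

variable {R : Type*} [CommSemiring R] [StarRing R]

noncomputable def starReflect (N : ℕ) (p : R[X]) : R[X] :=
  reflect N (p.map (starRingEnd R))

variable {N : ℕ} {p : R[X]}

lemma coeff_starReflect (i : ℕ) : (starReflect N p).coeff i = star (p.coeff (revAt N i)) := by
  simp [starReflect, coeff_reflect, starRingEnd_apply]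

lemma starReflect_add (q : R[X]) : starReflect N (p + q) = starReflect N p + starReflect N q := by
  simp [starReflect, Polynomial.map_add, reflect_add]

lemma natDegree_starReflect_le (hp : p.natDegree ≤ N) : (starReflect N p).natDegree ≤ N :=
  natDegree_reflect_le.trans (max_le le_rfl (natDegree_map_le.trans hp))

lemma natDegree_mul_starReflect_le (hp : p.natDegree ≤ N) :
    (p * starReflect N p).natDegree ≤ N + N :=
  natDegree_mul_le_of_le hp (natDegree_starReflect_le hp)

lemma map_star_starReflect : (starReflect N p).map (starRingEnd R) = reflect N p := by
  ext i
  simp [coeff_starReflect, coeff_reflect, starRingEnd_apply]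

lemma reflect_starReflect : reflect N (starReflect N p) = p.map (starRingEnd R) :=
  reflect_reflect

lemma map_star_mul_starReflect (hp : p.natDegree ≤ N) :
    (p * starReflect N p).map (starRingEnd R) = reflect (N + N) (p * starReflect N p) := by
  rw [Polynomial.map_mul, map_star_starReflect,
    reflect_mul _ _ hp (natDegree_starReflect_le hp), reflect_starReflect, mul_comm]

lemma coeff_mul_starReflect :
    (p * starReflect N p).coeff N = ∑ k ∈ Finset.range (N + 1), p.coeff k * star (p.coeff k) := by
  rw [coeff_mul, Finset.Nat.sum_antidiagonal_eq_sum_range_succ_mk]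
  refine Finset.sum_congr rfl fun k hk => ?_
  have hk : k ≤ N := Nat.lt_succ_iff.mp (Finset.mem_range.mp hk)
  rw [coeff_starReflect, revAt_le (Nat.sub_le N k), Nat.sub_sub_self hk]

/-- The coefficients `d > N` are conjugates of the vanishing coefficients `2N - d < N`. -/
lemma eq_C_mul_X_pow_of_map_star_eq_reflect {Q : R[X]} (hdeg : Q.natDegree ≤ N + N)
    (hsym : Q.map (starRingEnd R) = reflect (N + N) Q) (hdvd : X ^ N ∣ Q) :
    Q = C (Q.coeff N) * X ^ N := by
  have hlow := X_pow_dvd_iff.mp hdvd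
  ext d
  rw [coeff_C_mul_X_pow]
  rcases lt_trichotomy d N with h | rfl | h
  · rw [hlow d h, if_neg h.ne]
  · rw [if_pos rfl]
  rw [if_neg h.ne']
  rcases le_or_gt d (N + N) with h' | h'
  · have hd := congrArg (coeff · d) hsym
    simp only [coeff_map, coeff_reflect, revAt_le h', hlow _ (by omega : N + N - d < N)] at hd
    simpa [starRingEnd_apply] using congrArg star hd
  · exact coeff_eq_zero_of_natDegree_lt (hdeg.trans_lt h')

end StarReflect

lemma starReflect_real_smul {N : ℕ} (r : ℝ) (p : ℂ[X]) :
    starReflect N (r • p) = r • starReflect N p := by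
  ext i
  simp [coeff_starReflect]

end Polynomial

lemma isPolyFun_iff_X_pow_dvd {W : ℂ[X]} {f : ℂ → ℂ} {n : ℕ}
    (hW : ∀ z, z ≠ 0 → W.eval z = z ^ n * f z) : IsPolyFun f ↔ X ^ n ∣ W := by
  constructor
  · rintro ⟨q, hq⟩
    refine ⟨q, eq_of_infinite_eval_eq _ _ ((Set.finite_singleton 0).infinite_compl.mono ?_)⟩
    intro z hz
    simp [hW z hz, hq z hz]
  · rintro ⟨q, rfl⟩
    refine ⟨q, fun z hz => ?_⟩
    have := hW z hz
    rw [eval_mul, eval_pow, eval_X] at this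
    exact (mul_left_cancel₀ (pow_ne_zero n hz) this).symm

section Daubechies

variable {N : ℕ}

lemma pEval_eq_eval (a : Fin (N + 1) → ℂ) (z : ℂ) : pEval a z = (ofFinCoeffs _ a).eval z :=
  (eval_ofFinCoeffs a z).symm

lemma pTilde_one (a : Fin (N + 1) → ℂ) : pTilde a 1 = conj (pEval a 1) := by
  simp [pTilde, pEval]

lemma eval_starReflect_ofFinCoeffs (a : Fin (N + 1) → ℂ) {z : ℂ} (hz : z ≠ 0) :
    (starReflect N (ofFinCoeffs _ a)).eval z = z ^ N * pTilde a z := by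
  rw [starReflect,
    eval_reflect_of_ne_zero (natDegree_map_le.trans (natDegree_ofFinCoeffs_le a)) hz,
    map_ofFinCoeffs, eval_ofFinCoeffs]
  rfl

noncomputable def phiPoly (g : Fin N → ℂ) : ℂ[X] :=
  reflect N (ofFinCoeffs (N + 1) (Fin.cons 0 g))

lemma eval_phiPoly (g : Fin N → ℂ) {z : ℂ} (hz : z ≠ 0) :
    (phiPoly g).eval z = z ^ N * nEval g z := by
  rw [phiPoly, eval_reflect_of_ne_zero (natDegree_ofFinCoeffs_le _) hz, eval_ofFinCoeffs,
    Fin.sum_univ_succ]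
  simp [nEval]

variable (g : Fin N → ℂ) (a b : Fin (N + 1) → ℂ)

-- `z ^ N` times the lower entries of `[[1, 0], [φ, 1]] · [[α, β], [-β̃, α̃]]`
noncomputable def lowerLeftPoly : ℂ[X] :=
  phiPoly g * ofFinCoeffs _ a - starReflect N (ofFinCoeffs _ b)

noncomputable def lowerRightPoly : ℂ[X] :=
  phiPoly g * ofFinCoeffs _ b + starReflect N (ofFinCoeffs _ a)

lemma isPolyFun_lowerLeft_iff :
    IsPolyFun (fun z => nEval g z * pEval a z - pTilde b z) ↔ X ^ N ∣ lowerLeftPoly g a b :=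
  isPolyFun_iff_X_pow_dvd fun z hz => by
    rw [lowerLeftPoly, eval_sub, eval_mul, eval_phiPoly g hz, eval_starReflect_ofFinCoeffs b hz,
      ← pEval_eq_eval]
    ring

lemma isPolyFun_lowerRight_iff :
    IsPolyFun (fun z => nEval g z * pEval b z + pTilde a z) ↔ X ^ N ∣ lowerRightPoly g a b :=
  isPolyFun_iff_X_pow_dvd fun z hz => by
    rw [lowerRightPoly, eval_add, eval_mul, eval_phiPoly g hz, eval_starReflect_ofFinCoeffs a hz,
      ← pEval_eq_eval]
    ring

lemma isPolyFun_matrix_iff :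
    (∀ i j : Fin 2, IsPolyFun (fun z =>
        ((!![(1 : ℂ), 0; nEval g z, 1] : Matrix (Fin 2) (Fin 2) ℂ) *
          !![pEval a z, pEval b z; -pTilde b z, pTilde a z]) i j)) ↔
      X ^ N ∣ lowerLeftPoly g a b ∧ X ^ N ∣ lowerRightPoly g a b := by
  have hpEval (c : Fin (N + 1) → ℂ) : IsPolyFun (pEval c) :=
    ⟨ofFinCoeffs _ c, fun z _ => pEval_eq_eval c z⟩
  simp only [Fin.forall_fin_two, Matrix.mul_apply, Fin.sum_univ_two, Matrix.of_apply,
    Matrix.cons_val', Matrix.cons_val_zero, Matrix.cons_val_one, Matrix.empty_val',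
    Matrix.cons_val_fin_one, one_mul, zero_mul, add_zero, ← sub_eq_add_neg, mul_neg]
  simp [hpEval, isPolyFun_lowerLeft_iff, isPolyFun_lowerRight_iff]

/-- `z ^ N (α α̃ + β β̃)`. -/
noncomputable def hermPoly : ℂ[X] :=
  ofFinCoeffs _ a * starReflect N (ofFinCoeffs _ a) +
    ofFinCoeffs _ b * starReflect N (ofFinCoeffs _ b)

lemma hermPoly_eq_sub :
    hermPoly a b =
      ofFinCoeffs _ a * lowerRightPoly g a b - ofFinCoeffs _ b * lowerLeftPoly g a b := by
  simp only [hermPoly, lowerLeftPoly, lowerRightPoly]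
  ring

lemma natDegree_hermPoly_le : (hermPoly a b).natDegree ≤ N + N :=
  natDegree_add_le_of_degree_le (natDegree_mul_starReflect_le (natDegree_ofFinCoeffs_le a))
    (natDegree_mul_starReflect_le (natDegree_ofFinCoeffs_le b))

lemma map_star_hermPoly : (hermPoly a b).map (starRingEnd ℂ) = reflect (N + N) (hermPoly a b) := by
  rw [hermPoly, Polynomial.map_add, reflect_add,
    map_star_mul_starReflect (natDegree_ofFinCoeffs_le a),
    map_star_mul_starReflect (natDegree_ofFinCoeffs_le b)]

lemma coeff_hermPoly : (hermPoly a b).coeff N = a ⬝ᵥ star a + b ⬝ᵥ star b := by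
  simp only [hermPoly, coeff_add, coeff_mul_starReflect, dotProduct, Pi.star_apply,
    ← Fin.sum_univ_eq_sum_range, coeff_ofFinCoeffs]

lemma hermPoly_eq_C_mul_X_pow (hL : X ^ N ∣ lowerLeftPoly g a b)
    (hR : X ^ N ∣ lowerRightPoly g a b) :
    hermPoly a b = C (a ⬝ᵥ star a + b ⬝ᵥ star b) * X ^ N := by
  have hdvd : X ^ N ∣ hermPoly a b :=
    hermPoly_eq_sub g a b ▸ dvd_sub (dvd_mul_of_dvd_right hR _) (dvd_mul_of_dvd_right hL _)
  rw [eq_C_mul_X_pow_of_map_star_eq_reflect (natDegree_hermPoly_le a b) (map_star_hermPoly a b)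
    hdvd, coeff_hermPoly]

lemma pEval_mul_pTilde_add (hL : X ^ N ∣ lowerLeftPoly g a b)
    (hR : X ^ N ∣ lowerRightPoly g a b) {z : ℂ} (hz : z ≠ 0) :
    pEval a z * pTilde a z + pEval b z * pTilde b z = a ⬝ᵥ star a + b ⬝ᵥ star b := by
  have := congrArg (eval z) (hermPoly_eq_C_mul_X_pow g a b hL hR)
  rw [hermPoly, eval_add, eval_mul, eval_mul, eval_starReflect_ofFinCoeffs a hz,
    eval_starReflect_ofFinCoeffs b hz, ← pEval_eq_eval, ← pEval_eq_eval, eval_mul, eval_C,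
    eval_pow, eval_X] at this
  refine mul_left_cancel₀ (pow_ne_zero N hz) ?_
  linear_combination this

/-- Its fibre over `(0, 0, 1, 0)` is the set of pairs satisfying (ii) and (iii). -/
noncomputable def constraintMap :
    (Fin (N + 1) → ℂ) × (Fin (N + 1) → ℂ) →ₗ[ℝ] (Fin N → ℂ) × (Fin N → ℂ) × ℂ × ℂ where
  toFun ab := (fun m => (lowerLeftPoly g ab.1 ab.2).coeff m,
    fun m => (lowerRightPoly g ab.1 ab.2).coeff m, pEval ab.1 1, pEval ab.2 1)
  map_add' _ _ := by
    ext <;> simp [lowerLeftPoly, lowerRightPoly, pEval_eq_eval, starReflect_add, mul_add] <;> ring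
  map_smul' _ _ := by
    ext <;> simp [lowerLeftPoly, lowerRightPoly, pEval_eq_eval, starReflect_real_smul,
      LinearMap.map_smul_of_tower, smul_sub, smul_add, eval_smul]

variable {g} in
lemma constraintMap_eq_iff (ab : (Fin (N + 1) → ℂ) × (Fin (N + 1) → ℂ)) (u v : ℂ) :
    constraintMap g ab = (0, 0, u, v) ↔
      (X ^ N ∣ lowerLeftPoly g ab.1 ab.2 ∧ X ^ N ∣ lowerRightPoly g ab.1 ab.2) ∧
        pEval ab.1 1 = u ∧ pEval ab.2 1 = v := by
  simp [constraintMap, X_pow_dvd_iff, funext_iff, Fin.forall_iff, and_assoc]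

open scoped ComplexOrder in
lemma constraintMap_injective : Function.Injective (constraintMap g) := by
  refine (injective_iff_map_eq_zero _).mpr fun ⟨a, b⟩ h => ?_
  obtain ⟨⟨hL, hR⟩, ha, hb⟩ := (constraintMap_eq_iff _ 0 0).mp h
  have hsum := pEval_mul_pTilde_add g a b hL hR one_ne_zero
  rw [pTilde_one, pTilde_one, ha, hb] at hsum
  simp only [map_zero, mul_zero, add_zero] at hsum
  obtain ⟨ha0, hb0⟩ := (add_eq_zero_iff_of_nonneg (dotProduct_self_star_nonneg a)
    (dotProduct_self_star_nonneg b)).mp hsum.symm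
  simp [dotProduct_self_star_eq_zero.mp ha0, dotProduct_self_star_eq_zero.mp hb0]

lemma constraintMap_bijective : Function.Bijective (constraintMap g) := by
  refine ⟨constraintMap_injective g,
    (LinearMap.injective_iff_surjective_of_finrank_eq_finrank ?_).mp (constraintMap_injective g)⟩
  simp [Module.finrank_pi_fintype]
  ring

end Daubechies

theorem daubechies_theorem1_general (N : ℕ) (g : Fin N → ℂ) :
    ∃! ab : (Fin (N + 1) → ℂ) × (Fin (N + 1) → ℂ),
      (∀ z : ℂ, z ≠ 0 →
        pEval ab.1 z * pTilde ab.1 z + pEval ab.2 z * pTilde ab.2 z = 1) ∧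
      pEval ab.1 1 = 1 ∧ pEval ab.2 1 = 0 ∧
      ∀ i j : Fin 2, IsPolyFun (fun z =>
        ((!![(1 : ℂ), 0; nEval g z, 1] : Matrix (Fin 2) (Fin 2) ℂ) *
          !![pEval ab.1 z, pEval ab.2 z; -pTilde ab.2 z, pTilde ab.1 z]) i j) := by
  refine (existsUnique_congr fun ab => ?_).mpr
    ((constraintMap_bijective g).existsUnique (0, 0, 1, 0))
  rw [isPolyFun_matrix_iff, constraintMap_eq_iff]
  constructor
  · rintro ⟨-, h1, h0, hdvd⟩
    exact ⟨hdvd, h1, h0⟩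
  · rintro ⟨⟨hL, hR⟩, h1, h0⟩
    refine ⟨fun z hz => ?_, h1, h0, hL, hR⟩
    rw [pEval_mul_pTilde_add g _ _ hL hR hz, ← pEval_mul_pTilde_add g _ _ hL hR one_ne_zero,
      pTilde_one, pTilde_one, h1, h0]
    simp

/-- Theorem 1: for any nonzero `φ ∈ P⁻_N` there is a unique pair `α, β ∈ P⁺_N` with
`α α̃ + β β̃ = 1` on `ℂ \ {0}`, `α(1) = 1`, `β(1) = 0`, and all entries of
`[[1,0],[φ,1]]·[[α,β],[-β̃,α̃]]` containing only nonnegative powers of `z`. -/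
theorem daubechies_theorem1 (N : ℕ) (hN : 1 ≤ N) (g : Fin N → ℂ) (hg : g ≠ 0) :
    ∃! ab : (Fin (N + 1) → ℂ) × (Fin (N + 1) → ℂ),
      (∀ z : ℂ, z ≠ 0 →
        pEval ab.1 z * pTilde ab.1 z + pEval ab.2 z * pTilde ab.2 z = 1) ∧
      pEval ab.1 1 = 1 ∧ pEval ab.2 1 = 0 ∧
      ∀ i j : Fin 2, IsPolyFun (fun z =>
        ((!![(1 : ℂ), 0; nEval g z, 1] : Matrix (Fin 2) (Fin 2) ℂ) *
          !![pEval ab.1 z, pEval ab.2 z; -pTilde ab.2 z, pTilde ab.1 z]) i j) :=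
  daubechies_theorem1_general N g
end

section
/- Let N ≥ 1, φ ∈ P^-_N, and α, β ∈ P^+_N satisfy: all entries of [[1,0],[φ,1]]·[[α,β],[-β̃,α̃]] are polynomials in nonnegative powers of z, and α(z)α̃(z)+β(z)β̃(z)=1 on ℂ\{0}. Then |α(0)| + |β(0)| > 0, i.e., α and β do not both vanish at 0. -/
open Complex Finset Matrix

/-! The bottom row `(φα - β̃, φβ + α̃)` of the product consists of polynomials `p, q`, and
`α q - β p = αα̃ + ββ̃ = 1` on `ℂ \ {0}` because the `φ`-terms cancel. A polynomial identity
that holds off `0` holds everywhere, so `α(0) q(0) - β(0) p(0) = 1`. -/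

open Polynomial

noncomputable def toPoly {N : ℕ} (a : Fin (N + 1) → ℂ) : ℂ[X] :=
  ∑ k : Fin (N + 1), C (a k) * X ^ (k : ℕ)

lemma eval_toPoly {N : ℕ} (a : Fin (N + 1) → ℂ) (z : ℂ) : (toPoly a).eval z = pEval a z := by
  simp [toPoly, pEval, eval_finsetSum]

lemma Polynomial.eq_of_eval_eq_of_ne_zero {R : Type*} [CommRing R] [IsDomain R] [Infinite R]
    {p q : R[X]} (h : ∀ z ≠ 0, p.eval z = q.eval z) : p = q :=
  eq_of_infinite_eval_eq p q <| Set.infinite_of_finite_compl <|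
    (Set.finite_singleton 0).subset fun z hz => by_contra fun hz0 => hz (h z hz0)

lemma pos_norm_add_norm_of_mul_sub_mul_eq_one {R : Type*} [NormedRing R] [Nontrivial R]
    {a b c d : R} (h : a * d - b * c = 1) : 0 < ‖a‖ + ‖b‖ := by
  by_contra! hle
  have ha : a = 0 := norm_eq_zero.mp (by linarith [norm_nonneg a, norm_nonneg b])
  have hb : b = 0 := norm_eq_zero.mp (by linarith [norm_nonneg a, norm_nonneg b])
  simp [ha, hb] at h

lemma toPoly_mul_sub_toPoly_mul_eq_one {N : ℕ} {g : Fin N → ℂ} {a b : Fin (N + 1) → ℂ}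
    {p q : ℂ[X]}
    (hp : ∀ z ≠ 0, nEval g z * pEval a z - pTilde b z = p.eval z)
    (hq : ∀ z ≠ 0, nEval g z * pEval b z + pTilde a z = q.eval z)
    (hunit : ∀ z : ℂ, z ≠ 0 → pEval a z * pTilde a z + pEval b z * pTilde b z = 1) :
    toPoly a * q - toPoly b * p = 1 :=
  eq_of_eval_eq_of_ne_zero fun z hz => by
    simp only [eval_sub, eval_mul, eval_toPoly, eval_one, ← hp z hz, ← hq z hz]
    linear_combination hunit z hz

theorem daubechies_zero_condition_general (N : ℕ) (g : Fin N → ℂ)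
    (a b : Fin (N + 1) → ℂ)
    (hpoly : ∀ i j : Fin 2, IsPolyFun (fun z =>
      ((!![(1 : ℂ), 0; nEval g z, 1] : Matrix (Fin 2) (Fin 2) ℂ) *
        !![pEval a z, pEval b z; -pTilde b z, pTilde a z]) i j))
    (hunit : ∀ z : ℂ, z ≠ 0 →
      pEval a z * pTilde a z + pEval b z * pTilde b z = 1) :
    0 < ‖pEval a 0‖ + ‖pEval b 0‖ := by
  obtain ⟨p, hp⟩ := hpoly 1 0
  obtain ⟨q, hq⟩ := hpoly 1 1
  simp only [mul_apply, Fin.sum_univ_two, of_apply, cons_val', cons_val_zero, cons_val_one,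
    empty_val', cons_val_fin_one, one_mul, mul_neg] at hp hq
  have hbezout := congrArg (eval 0) (toPoly_mul_sub_toPoly_mul_eq_one hp hq hunit)
  simp only [eval_sub, eval_mul, eval_toPoly, eval_one] at hbezout
  exact pos_norm_add_norm_of_mul_sub_mul_eq_one hbezout

/-- If `[[1,0],[φ,1]]·[[α,β],[-β̃,α̃]]` has only nonnegative powers of `z` in all entries and
`α α̃ + β β̃ = 1` on `ℂ \ {0}`, then `|α(0)| + |β(0)| > 0`. -/
theorem daubechies_zero_condition (N : ℕ) (hN : 1 ≤ N) (g : Fin N → ℂ)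
    (a b : Fin (N + 1) → ℂ)
    (hpoly : ∀ i j : Fin 2, IsPolyFun (fun z =>
      ((!![(1 : ℂ), 0; nEval g z, 1] : Matrix (Fin 2) (Fin 2) ℂ) *
        !![pEval a z, pEval b z; -pTilde b z, pTilde a z]) i j))
    (hunit : ∀ z : ℂ, z ≠ 0 →
      pEval a z * pTilde a z + pEval b z * pTilde b z = 1) :
    0 < ‖pEval a 0‖ + ‖pEval b 0‖ :=
  daubechies_zero_condition_general N g a b hpoly hunit
end

section
/- Let N ≥ 1 and γ_1,...,γ_N ∈ ℂ, not all zero. Let Θ be the (N+1)×(N+1) Hankel matrix with Θ_{ij} = γ_{i+j} (γ_0 := 0, γ_k := 0 for k > N). Let X ∈ ℂ^{N+1} be the unique solution of (Θ̄Θ + I)X = e_1 (first standard basis vector), and Y = Θ̄X̄. Then the polynomials α(z) = Σ_{k=0}^N x_k z^k and β(z) = Σ_{k=0}^N y_k z^k satisfy: for φ(z) = Σ_{k=1}^N γ_k z^{-k}, both φα - β̃ and φβ + α̃ contain only nonnegative powers of z, and α(z)α̃(z)+β(z)β̃(z) is a positive constant. -/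
open Complex Finset Matrix

/-!
After multiplication by `z ^ N`, all of `φ`, `α`, `β`, `α̃`, `β̃` become polynomials of degree at
most `N`, and for `d < N` the `d`-th coefficient of `z ^ N φ v` is the `(N - d)`-th entry of `Θ v`.
The given system is equivalent to `ΘX = Ȳ`, `ΘY + X̄ = e₁`, which therefore says that `z ^ N`
divides `z ^ N (φα - β̃)` and `z ^ N (φβ + α̃)`. Hence `αα̃ + ββ̃ = α (φβ + α̃) - β (φα - β̃)` has no
negative powers of `z`; being invariant under `p ↦ p̃` it has no positive ones either, so it is the
constant `∑ |x_k|² + |y_k|²`, which is positive because `X ≠ 0`.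
-/
open Polynomial ComplexConjugate

namespace Daubechies

lemma isPolyFun_of_pow_mul_eq_eval {f : ℂ → ℂ} {n : ℕ} {p : ℂ[X]} (hp : X ^ n ∣ p)
    (hf : ∀ z ≠ 0, z ^ n * f z = p.eval z) : IsPolyFun f := by
  obtain ⟨q, rfl⟩ := hp
  refine ⟨q, fun z hz => mul_left_cancel₀ (pow_ne_zero n hz) ?_⟩
  rw [hf z hz, eval_mul, eval_pow, eval_X]

lemma coeff_sum_C_mul_X_pow_mul_sum {R ι κ : Type*} [CommSemiring R] (s : Finset ι)
    (t : Finset κ) (f : ι → R) (g : κ → R) (e₁ : ι → ℕ) (e₂ : κ → ℕ) (d : ℕ) :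
    ((∑ i ∈ s, C (f i) * X ^ e₁ i) * ∑ j ∈ t, C (g j) * X ^ e₂ j).coeff d
      = ∑ i ∈ s, ∑ j ∈ t, if e₁ i + e₂ j = d then f i * g j else 0 := by
  simp only [sum_mul_sum, finsetSum_coeff]
  refine sum_congr rfl fun i _ => sum_congr rfl fun j _ => ?_
  rw [mul_mul_mul_comm, ← C_mul, ← pow_add, coeff_C_mul_X_pow]
  simp only [eq_comm]

lemma dvd_mul_add_mul_of_dvd_sub_of_dvd_add {R : Type*} [CommRing R] {d s a b a' b' : R}
    (h₁ : d ∣ s * a - b') (h₂ : d ∣ s * b + a') : d ∣ a * a' + b * b' := by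
  have h : a * a' + b * b' = a * (s * b + a') - b * (s * a - b') := by ring
  rw [h]
  exact dvd_sub (dvd_mul_of_dvd_right h₂ a) (dvd_mul_of_dvd_right h₁ b)

lemma eq_C_mul_X_pow_of_coeff_conj_symm {N : ℕ} {p : ℂ[X]} (hdvd : X ^ N ∣ p)
    (htop : ∀ k, 2 * N < k → p.coeff k = 0)
    (hsymm : ∀ k ≤ 2 * N, p.coeff (2 * N - k) = conj (p.coeff k)) :
    p = C (p.coeff N) * X ^ N := by
  have hlow := X_pow_dvd_iff.mp hdvd
  ext k
  rw [coeff_C_mul_X_pow]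
  rcases lt_trichotomy k N with h | rfl | h
  · rw [hlow k h, if_neg h.ne]
  · rw [if_pos rfl]
  · rw [if_neg h.ne']
    by_cases hk : k ≤ 2 * N
    · rw [← map_eq_zero (starRingEnd ℂ), ← hsymm k hk, hlow _ (by omega)]
    · exact htop k (by omega)

section Polys

variable {N : ℕ}

noncomputable def poly (a : Fin (N + 1) → ℂ) : ℂ[X] :=
  ∑ k : Fin (N + 1), C (a k) * X ^ (k : ℕ)

noncomputable def polyTilde (a : Fin (N + 1) → ℂ) : ℂ[X] :=
  ∑ k : Fin (N + 1), C (conj (a k)) * X ^ (N - k)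

variable (N) in
noncomputable def symbolPoly (γ : ℕ → ℂ) : ℂ[X] :=
  ∑ m ∈ Icc 1 N, C (γ m) * X ^ (N - m)

lemma eval_poly (a : Fin (N + 1) → ℂ) (z : ℂ) : (poly a).eval z = pEval a z := by
  simp [poly, pEval, eval_finsetSum]

lemma eval_polyTilde (a : Fin (N + 1) → ℂ) {z : ℂ} (hz : z ≠ 0) :
    (polyTilde a).eval z = z ^ N * pTilde a z := by
  simp only [polyTilde, pTilde, eval_finsetSum, eval_mul, eval_C, eval_pow, eval_X, mul_sum]
  refine sum_congr rfl fun k _ => ?_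
  rw [pow_sub₀ z hz (Nat.lt_succ_iff.mp k.isLt), inv_pow]
  ring

lemma eval_symbolPoly (γ : ℕ → ℂ) {z : ℂ} (hz : z ≠ 0) :
    (symbolPoly N γ).eval z = z ^ N * ∑ m ∈ Icc 1 N, γ m * z⁻¹ ^ m := by
  simp only [symbolPoly, eval_finsetSum, eval_mul, eval_C, eval_pow, eval_X, mul_sum]
  refine sum_congr rfl fun m hm => ?_
  rw [pow_sub₀ z hz (mem_Icc.mp hm).2, inv_pow]
  ring

lemma coeff_polyTilde (a : Fin (N + 1) → ℂ) {d : ℕ} (hd : d ≤ N) :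
    (polyTilde a).coeff d = conj (a ⟨N - d, by omega⟩) := by
  rw [polyTilde, finsetSum_coeff, sum_eq_single_of_mem ⟨N - d, by omega⟩ (mem_univ _)]
  · rw [coeff_C_mul_X_pow, if_pos (by simp; omega)]
  · intro k _ hk
    rw [coeff_C_mul_X_pow, if_neg]
    exact fun h => hk (Fin.ext (by simp; omega))

lemma coeff_symbolPoly_mul_poly {γ : ℕ → ℂ} (hγtop : ∀ k, N < k → γ k = 0)
    {Θ : Matrix (Fin (N + 1)) (Fin (N + 1)) ℂ} (hΘ : ∀ i j : Fin (N + 1), Θ i j = γ (i + j))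
    (v : Fin (N + 1) → ℂ) {d : ℕ} (hd : d < N) :
    (symbolPoly N γ * poly v).coeff d = (Θ *ᵥ v) ⟨N - d, by omega⟩ := by
  rw [symbolPoly, poly, coeff_sum_C_mul_X_pow_mul_sum, sum_comm, mulVec, dotProduct]
  refine sum_congr rfl fun j _ => ?_
  rw [hΘ]
  have hj := j.isLt
  by_cases hjd : (j : ℕ) ≤ d
  · rw [sum_eq_single_of_mem (N - d + j) (mem_Icc.mpr (by omega)), if_pos (by omega)]
    intro m hm hne
    rw [if_neg (by simp at hm; omega)]
  · rw [sum_eq_zero, hγtop _ (by simp; omega), zero_mul]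
    intro m hm
    rw [if_neg (by simp at hm; omega)]

lemma X_pow_dvd_symbolPoly_mul_poly_sub_polyTilde {γ : ℕ → ℂ} (hγtop : ∀ k, N < k → γ k = 0)
    {Θ : Matrix (Fin (N + 1)) (Fin (N + 1)) ℂ} (hΘ : ∀ i j : Fin (N + 1), Θ i j = γ (i + j))
    {x y : Fin (N + 1) → ℂ} (h : ∀ i ≠ 0, (Θ *ᵥ x) i = conj (y i)) :
    X ^ N ∣ symbolPoly N γ * poly x - polyTilde y := by
  refine X_pow_dvd_iff.mpr fun d hd => ?_
  rw [coeff_sub, coeff_symbolPoly_mul_poly hγtop hΘ x hd, coeff_polyTilde y hd.le,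
    h _ (Fin.ne_of_val_ne (by simp; omega)), sub_self]

lemma X_pow_dvd_symbolPoly_mul_poly_add_polyTilde {γ : ℕ → ℂ} (hγtop : ∀ k, N < k → γ k = 0)
    {Θ : Matrix (Fin (N + 1)) (Fin (N + 1)) ℂ} (hΘ : ∀ i j : Fin (N + 1), Θ i j = γ (i + j))
    {x y : Fin (N + 1) → ℂ} (h : ∀ i ≠ 0, (Θ *ᵥ y) i + conj (x i) = 0) :
    X ^ N ∣ symbolPoly N γ * poly y + polyTilde x := by
  refine X_pow_dvd_iff.mpr fun d hd => ?_
  rw [coeff_add, coeff_symbolPoly_mul_poly hγtop hΘ y hd, coeff_polyTilde x hd.le,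
    h _ (Fin.ne_of_val_ne (by simp; omega))]

lemma coeff_poly_mul_polyTilde (v w : Fin (N + 1) → ℂ) (k : ℕ) :
    (poly v * polyTilde w).coeff k
      = ∑ j : Fin (N + 1), ∑ l : Fin (N + 1),
          if (j : ℕ) + (N - l) = k then v j * conj (w l) else 0 :=
  coeff_sum_C_mul_X_pow_mul_sum _ _ _ _ _ _ _

lemma coeff_poly_mul_polyTilde_self_middle (v : Fin (N + 1) → ℂ) :
    (poly v * polyTilde v).coeff N = ∑ j, (normSq (v j) : ℂ) := by
  rw [coeff_poly_mul_polyTilde]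
  refine sum_congr rfl fun j _ => ?_
  rw [sum_eq_single_of_mem j (mem_univ _), if_pos (by omega), mul_conj]
  intro l _ hlj
  rw [if_neg fun h => hlj (Fin.ext (by omega))]

lemma coeff_poly_mul_polyTilde_self_symm (v : Fin (N + 1) → ℂ) {k : ℕ} (hk : k ≤ 2 * N) :
    (poly v * polyTilde v).coeff (2 * N - k) = conj ((poly v * polyTilde v).coeff k) := by
  simp only [coeff_poly_mul_polyTilde, map_sum]
  rw [sum_comm]
  refine sum_congr rfl fun j _ => sum_congr rfl fun l _ => ?_
  by_cases h : (j : ℕ) + (N - l) = k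
  · rw [if_pos (by omega), if_pos h, map_mul, conj_conj, mul_comm]
  · rw [if_neg (by omega), if_neg h, map_zero]

lemma coeff_poly_mul_polyTilde_eq_zero (v w : Fin (N + 1) → ℂ) {k : ℕ} (hk : 2 * N < k) :
    (poly v * polyTilde w).coeff k = 0 := by
  rw [coeff_poly_mul_polyTilde]
  exact sum_eq_zero fun j _ => sum_eq_zero fun l _ => if_neg (by omega)

lemma poly_mul_polyTilde_add_eq_C_mul_X_pow {x y : Fin (N + 1) → ℂ}
    (hdvd : X ^ N ∣ poly x * polyTilde x + poly y * polyTilde y) :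
    poly x * polyTilde x + poly y * polyTilde y
      = C (((∑ j, (normSq (x j) + normSq (y j)) : ℝ) : ℂ)) * X ^ N := by
  rw [eq_C_mul_X_pow_of_coeff_conj_symm hdvd]
  · simp only [coeff_add, coeff_poly_mul_polyTilde_self_middle, ofReal_sum, ofReal_add,
      sum_add_distrib]
  · intro k hk
    rw [coeff_add, coeff_poly_mul_polyTilde_eq_zero x x hk,
      coeff_poly_mul_polyTilde_eq_zero y y hk, add_zero]
  · intro k hk
    rw [coeff_add, coeff_add, map_add, coeff_poly_mul_polyTilde_self_symm x hk,
      coeff_poly_mul_polyTilde_self_symm y hk]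

end Polys

section Hankel

variable {n : Type*} [Fintype n] {Θ : Matrix n n ℂ} {x y : n → ℂ}

lemma mulVec_eq_conj_of_eq_conj_mulVec (hy : y = Θ.map conj *ᵥ fun i => conj (x i)) (i : n) :
    (Θ *ᵥ x) i = conj (y i) := by
  simp [hy, RingHom.map_mulVec, Matrix.map_map, Function.comp_def]

lemma mulVec_add_conj_eq_conj [DecidableEq n] {e : n → ℂ}
    (hx : (Θ.map conj * Θ + 1) *ᵥ x = e) (hy : y = Θ.map conj *ᵥ fun i => conj (x i)) (i : n) :
    (Θ *ᵥ y) i + conj (x i) = conj (e i) := by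
  rw [← hx, add_mulVec, one_mulVec, ← mulVec_mulVec, Pi.add_apply, map_add,
    RingHom.map_mulVec, funext (mulVec_eq_conj_of_eq_conj_mulVec hy), hy]
  simp [Function.comp_def, Matrix.map_map]

end Hankel

end Daubechies

open Daubechies

theorem daubechies_construction_general (N : ℕ) (γ : ℕ → ℂ)
    (hγtop : ∀ k : ℕ, N < k → γ k = 0)
    (Θ : Matrix (Fin (N + 1)) (Fin (N + 1)) ℂ)
    (hΘ : ∀ i j : Fin (N + 1), Θ i j = γ ((i : ℕ) + (j : ℕ)))
    (X Y : Fin (N + 1) → ℂ)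
    (hX : (Θ.map (starRingEnd ℂ) * Θ + 1).mulVec X =
      fun i => if i = 0 then (1 : ℂ) else 0)
    (hY : Y = (Θ.map (starRingEnd ℂ)).mulVec (fun i => (starRingEnd ℂ) (X i)))
    (φ : ℂ → ℂ) (hφ : ∀ z : ℂ, φ z = ∑ k ∈ Finset.Icc 1 N, γ k * z⁻¹ ^ k) :
    IsPolyFun (fun z => φ z * pEval X z - pTilde Y z) ∧
    IsPolyFun (fun z => φ z * pEval Y z + pTilde X z) ∧
    ∃ c : ℝ, 0 < c ∧ ∀ z : ℂ, z ≠ 0 →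
      pEval X z * pTilde X z + pEval Y z * pTilde Y z = (c : ℂ) := by
  have h₁ := X_pow_dvd_symbolPoly_mul_poly_sub_polyTilde hγtop hΘ
    fun i _ => mulVec_eq_conj_of_eq_conj_mulVec hY i
  have hΘY : ∀ i ≠ 0, (Θ *ᵥ Y) i + conj (X i) = 0 := fun i hi => by
    simp [mulVec_add_conj_eq_conj hX hY i, hi]
  have h₂ := X_pow_dvd_symbolPoly_mul_poly_add_polyTilde hγtop hΘ hΘY
  have hX0 : X ≠ 0 := by
    rintro rfl
    simpa using congrFun hX 0
  obtain ⟨j, hj⟩ := Function.ne_iff.mp hX0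
  refine ⟨isPolyFun_of_pow_mul_eq_eval h₁ fun z hz => ?_,
    isPolyFun_of_pow_mul_eq_eval h₂ fun z hz => ?_,
    ∑ i, (normSq (X i) + normSq (Y i)),
    sum_pos' (fun i _ => add_nonneg (normSq_nonneg _) (normSq_nonneg _))
      ⟨j, mem_univ j, add_pos_of_pos_of_nonneg (normSq_pos.mpr hj) (normSq_nonneg _)⟩,
    fun z hz => ?_⟩
  · simp only [eval_sub, eval_mul, eval_symbolPoly γ hz, eval_poly, eval_polyTilde Y hz, hφ]
    ring
  · simp only [eval_add, eval_mul, eval_symbolPoly γ hz, eval_poly, eval_polyTilde X hz, hφ]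
    ring
  · have h := congrArg (eval z)
      (poly_mul_polyTilde_add_eq_C_mul_X_pow (dvd_mul_add_mul_of_dvd_sub_of_dvd_add h₁ h₂))
    simp only [eval_add, eval_mul, eval_poly, eval_polyTilde _ hz, eval_C, eval_pow,
      eval_X] at h
    exact mul_left_cancel₀ (pow_ne_zero N hz) (by linear_combination h)

/-- Constructive part of Theorem 1: the polynomials `α, β` built from the solution of the
Hankel system `(Θ̄Θ + I)X = e₁`, `Y = Θ̄ X̄` satisfy that `φα - β̃` and `φβ + α̃` have only
nonnegative powers of `z` and `α α̃ + β β̃` is a positive constant. -/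
theorem daubechies_construction (N : ℕ) (hN : 1 ≤ N) (γ : ℕ → ℂ)
    (hγ0 : γ 0 = 0) (hγtop : ∀ k : ℕ, N < k → γ k = 0) (hγ : ∃ k, 1 ≤ k ∧ k ≤ N ∧ γ k ≠ 0)
    (Θ : Matrix (Fin (N + 1)) (Fin (N + 1)) ℂ)
    (hΘ : ∀ i j : Fin (N + 1), Θ i j = γ ((i : ℕ) + (j : ℕ)))
    (X Y : Fin (N + 1) → ℂ)
    (hX : (Θ.map (starRingEnd ℂ) * Θ + 1).mulVec X =
      fun i => if i = 0 then (1 : ℂ) else 0)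
    (hY : Y = (Θ.map (starRingEnd ℂ)).mulVec (fun i => (starRingEnd ℂ) (X i)))
    (φ : ℂ → ℂ) (hφ : ∀ z : ℂ, φ z = ∑ k ∈ Finset.Icc 1 N, γ k * z⁻¹ ^ k) :
    IsPolyFun (fun z => φ z * pEval X z - pTilde Y z) ∧
    IsPolyFun (fun z => φ z * pEval Y z + pTilde X z) ∧
    ∃ c : ℝ, 0 < c ∧ ∀ z : ℂ, z ≠ 0 →
      pEval X z * pTilde X z + pEval Y z * pTilde Y z = (c : ℂ) :=
  daubechies_construction_general N γ hγtop Θ hΘ X Y hX hY φ hφ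
end

section
/- If φ ∈ P^-_N has rational coefficients, then the unique α, β ∈ P^+_N satisfying α α̃ + β β̃ = 1, α(1)=1, β(1)=0, and the condition that [[1,0],[φ,1]]·[[α,β],[-β̃,α̃]] has entries with only nonnegative powers of z, have rational coefficients as well. -/
open Complex Finset Matrix

/-!
The polynomial conditions on the second row of the product say that the negative powers of `z`
cancel in `φ α - β̃` and in `φ β + α̃`. With `H = (γ_{l+m})` the real symmetric Hankel matrix of
`φ` and `c = conj β`, this means `H α = c` and `H c = -α` in all rows `m ≠ 0`; together with
`α(1) = 1` and `β(1) = 0` it is a square linear system with rational coefficients solved by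
`(α, c)`. Its complex kernel is trivial: for `ε = ±i`, `α + ε c` satisfies `H v = -ε v` in the
rows `m ≠ 0`. Since `H` is Hermitian and `-ε` is not real, a solution of these equations that
vanishes at `0` vanishes, so they form a line, spanned by `α + ε c`, on which the coordinate sum
is injective. A kernel vector `(α', c')` puts `α' + ε c'` on that line with coordinate sum `0`.
The system is therefore invertible over `ℚ`, and its unique solution is rational.
-/

open Polynomial

namespace Matrix

theorem exists_eq_comp_of_mulVec_eq {K L : Type*} [Field K] [CommRing L] [Nontrivial L]
    {n : Type*} [Fintype n] [DecidableEq n] (f : K →+* L) {A : Matrix n n K} {b : n → K}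
    {x : n → L} (hinj : Function.Injective (A.map f).mulVec) (hx : A.map f *ᵥ x = f ∘ b) :
    ∃ q : n → K, x = f ∘ q := by
  have map_mulVec_comp (y : n → K) : A.map f *ᵥ (f ∘ y) = f ∘ (A *ᵥ y) := by
    ext i; exact (RingHom.map_mulVec f A y i).symm
  have hinjK : Function.Injective A.mulVec := fun y y' h =>
    f.injective.comp_left (hinj (by rw [map_mulVec_comp, map_mulVec_comp, h]))
  obtain ⟨q, hq⟩ := mulVec_surjective_iff_isUnit.mpr (mulVec_injective_iff_isUnit.mp hinjK) b
  exact ⟨q, hinj (by rw [hx, map_mulVec_comp, hq])⟩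

section EigenspaceOffRow

variable {n : Type*} [Fintype n]

def eigenspaceOffRow (H : Matrix n n ℂ) (μ : ℂ) (i₀ : n) : Submodule ℂ (n → ℂ) where
  carrier := {w | ∀ m, m ≠ i₀ → (H *ᵥ w) m = μ * w m}
  add_mem' hv hw m hm := by simp [mulVec_add, hv m hm, hw m hm, mul_add]
  zero_mem' m _ := by simp
  smul_mem' c w hw m hm := by simp [mulVec_smul, hw m hm, mul_left_comm]

variable {H : Matrix n n ℂ} {μ : ℂ} {i₀ : n}

open ComplexOrder in
theorem IsHermitian.eq_zero_of_mem_eigenspaceOffRow (hH : H.IsHermitian) (hμ : μ.im ≠ 0)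
    {w : n → ℂ} (hw : w ∈ eigenspaceOffRow H μ i₀) (h0 : w i₀ = 0) : w = 0 := by
  classical
  -- `w* H w = μ ‖w‖²` is real since `H` is Hermitian, while `μ` is not
  have hform : star w ⬝ᵥ H *ᵥ w = μ * (star w ⬝ᵥ w) := by
    rw [dotProduct, dotProduct, Finset.mul_sum]
    refine Finset.sum_congr rfl fun m _ => ?_
    by_cases hm : m = i₀
    · simp [hm, h0]
    · rw [hw m hm, Pi.star_apply]; ring
  have hreal : (star w ⬝ᵥ w).im = 0 := by
    simpa using (isHermitian_one (n := n) (α := ℂ)).im_star_dotProduct_mulVec_self w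
  have him := hH.im_star_dotProduct_mulVec_self w
  rw [hform] at him
  simp only [RCLike.im_to_complex, Complex.mul_im, hreal, mul_zero, zero_add] at him
  rw [← dotProduct_star_self_eq_zero]
  exact Complex.ext ((mul_eq_zero.mp him).resolve_left hμ) hreal

theorem IsHermitian.eq_zero_of_mem_eigenspaceOffRow_of_sum_eq_zero (hH : H.IsHermitian)
    (hμ : μ.im ≠ 0) {u v : n → ℂ} (hu : u ∈ eigenspaceOffRow H μ i₀) (hu1 : ∑ m, u m = 1)
    (hv : v ∈ eigenspaceOffRow H μ i₀) (hv0 : ∑ m, v m = 0) : v = 0 := by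
  set w := v i₀ • u - u i₀ • v
  have hw : w = 0 := hH.eq_zero_of_mem_eigenspaceOffRow hμ
    (sub_mem (Submodule.smul_mem _ _ hu) (Submodule.smul_mem _ _ hv)) (by simp [w, mul_comm])
  have hvi₀ : v i₀ = 0 := by
    have hsum : ∑ m, w m = v i₀ := by
      simp [w, Finset.sum_sub_distrib, ← Finset.mul_sum, hu1, hv0]
    simpa [hw, eq_comm] using hsum
  exact hH.eq_zero_of_mem_eigenspaceOffRow hμ hv hvi₀

end EigenspaceOffRow

end Matrix

theorem IsPolyFun.coeff_eq_zero {F : ℂ → ℂ} (hF : IsPolyFun F) {Q : ℂ[X]} {N : ℕ}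
    (hQ : ∀ z, z ≠ 0 → Q.eval z = z ^ N * F z) {k : ℕ} (hk : k < N) : Q.coeff k = 0 := by
  obtain ⟨p, hp⟩ := hF
  have hQp : Q = X ^ N * p := Polynomial.eq_of_infinite_eval_eq _ _ <|
    (Set.finite_singleton 0).infinite_compl.mono fun z hz => by
      simp [hQ z hz, hp z hz]
  rw [hQp, coeff_X_pow_mul', if_neg (by omega)]

namespace Daubechies

section Hankel

variable {R : Type*} {n : ℕ}

def hankel (G : ℕ → R) : Matrix (Fin n) (Fin n) R := Matrix.of fun m l => G (l + m)

theorem isHermitian_hankel [Star R] {G : ℕ → R} (hG : ∀ j, star (G j) = G j) :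
    (hankel G : Matrix (Fin n) (Fin n) R).IsHermitian := by
  ext m l
  simp [hankel, hG, add_comm]

theorem hankel_mulVec_star {G : ℕ → ℂ} (hG : ∀ j, star (G j) = G j) (u : Fin n → ℂ) :
    hankel G *ᵥ star u = star (hankel G *ᵥ u) := by
  ext m
  simp [hankel, mulVec, dotProduct, star_sum, hG]

def IsHankelRotation [NonUnitalNonAssocRing R] (G : ℕ → R) (a c : Fin (n + 1) → R) : Prop :=
  ∀ m, m ≠ 0 → (hankel G *ᵥ a) m = c m ∧ (hankel G *ᵥ c) m = -a m

theorem IsHankelRotation.add_smul_mem_eigenspaceOffRow {G : ℕ → ℂ} {a c : Fin (n + 1) → ℂ}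
    (h : IsHankelRotation G a c) {ε : ℂ} (hε : ε * ε = -1) :
    a + ε • c ∈ eigenspaceOffRow (hankel G) (-ε) 0 := fun m hm => by
  simp only [mulVec_add, mulVec_smul, Pi.add_apply, Pi.smul_apply, smul_eq_mul, (h m hm).1,
    (h m hm).2]
  linear_combination c m * hε

/-- The coordinate-sum rows `inl 0` and `inr 0` encode the values at `z = 1`. -/
def coeffSystem [Ring R] (G : ℕ → R) :
    Matrix (Fin (n + 1) ⊕ Fin (n + 1)) (Fin (n + 1) ⊕ Fin (n + 1)) R :=
  ((fromBlocks (hankel G) (-1) 1 (hankel G)).updateRow (.inl 0) (Sum.elim 1 0)).updateRow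
    (.inr 0) (Sum.elim 0 1)

theorem coeffSystem_map [Ring R] {S : Type*} [Ring S] (f : R →+* S) (G : ℕ → R) :
    (coeffSystem G : Matrix (Fin (n + 1) ⊕ Fin (n + 1)) _ R).map f = coeffSystem (f ∘ G) := by
  ext (i | i) (j | j) <;>
    simp [coeffSystem, updateRow_apply, hankel, one_apply, apply_ite f]

theorem coeffSystem_mulVec [Ring R] (G : ℕ → R) (a c : Fin (n + 1) → R) :
    coeffSystem G *ᵥ Sum.elim a c = Sum.elim (Function.update (hankel G *ᵥ a - c) 0 (∑ l, a l))
      (Function.update (a + hankel G *ᵥ c) 0 (∑ l, c l)) := by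
  rw [coeffSystem, updateRow_mulVec, updateRow_mulVec, fromBlocks_mulVec, Sum.elim_comp_inl,
    Sum.elim_comp_inr, Sum.update_elim_inl, Sum.update_elim_inr, sumElim_dotProduct_sumElim,
    sumElim_dotProduct_sumElim, neg_mulVec, one_mulVec, one_mulVec, one_dotProduct,
    one_dotProduct, zero_dotProduct, zero_dotProduct, add_zero, zero_add, ← sub_eq_add_neg]

theorem coeffSystem_mulVec_eq_iff [Ring R] (G : ℕ → R) (a c : Fin (n + 1) → R) (s t : R) :
    coeffSystem G *ᵥ Sum.elim a c = Sum.elim (Pi.single 0 s) (Pi.single 0 t) ↔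
      ∑ l, a l = s ∧ ∑ l, c l = t ∧ IsHankelRotation G a c := by
  rw [coeffSystem_mulVec, Sum.elim_eq_iff, Function.update_eq_iff, Function.update_eq_iff]
  simp +contextual only [IsHankelRotation, Pi.single_eq_same, ne_eq, not_false_eq_true,
    Pi.single_eq_of_ne, Pi.sub_apply, sub_eq_zero, Pi.add_apply, add_eq_zero_iff_eq_neg',
    imp_and, forall_and]
  tauto

theorem coeffSystem_mulVec_injective {G : ℕ → ℂ} (hG : ∀ j, star (G j) = G j)
    {a c : Fin (n + 1) → ℂ} (ha : ∑ l, a l = 1) (hc : ∑ l, c l = 0)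
    (hac : IsHankelRotation G a c) :
    Function.Injective (coeffSystem G : Matrix (Fin (n + 1) ⊕ Fin (n + 1)) _ ℂ).mulVec := by
  intro y y' hyy'
  rw [← sub_eq_zero, ← Sum.elim_comp_inl_inr (y - y')]
  set a' := (y - y') ∘ Sum.inl
  set c' := (y - y') ∘ Sum.inr
  obtain ⟨ha', hc', hac'⟩ := (coeffSystem_mulVec_eq_iff G a' c' 0 0).mp <| by
    rw [Sum.elim_comp_inl_inr, mulVec_sub, hyy', sub_self, Pi.single_zero,
      Sum.elim_zero_zero]
  have key (ε : ℂ) (hε : ε * ε = -1) (hεim : ε.im ≠ 0) : a' + ε • c' = 0 :=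
    (isHermitian_hankel hG).eq_zero_of_mem_eigenspaceOffRow_of_sum_eq_zero (by simpa using hεim)
      (hac.add_smul_mem_eigenspaceOffRow hε) (by simp [sum_add_distrib, ← mul_sum, ha, hc])
      (hac'.add_smul_mem_eigenspaceOffRow hε) (by simp [sum_add_distrib, ← mul_sum, ha', hc'])
  have hplus := key I I_mul_I (by simp)
  have hminus := key (-I) (by simp) (by simp)
  have hcoord (m : Fin (n + 1)) : a' m = 0 ∧ c' m = 0 := by
    have h₁ := congrFun hplus m
    have h₂ := congrFun hminus m
    simp only [Pi.add_apply, Pi.smul_apply, smul_eq_mul, Pi.zero_apply] at h₁ h₂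
    exact ⟨by linear_combination (h₁ + h₂) / 2,
      by linear_combination (h₁ - h₂) * (-I) / 2 + c' m * I_mul_I⟩
  have ha'0 : a' = 0 := funext fun m => (hcoord m).1
  have hc'0 : c' = 0 := funext fun m => (hcoord m).2
  rw [ha'0, hc'0, Sum.elim_zero_zero]

end Hankel

variable {N : ℕ}

/-- `phiCoeff γ j` is the coefficient of `z⁻ʲ` in `nEval γ`. -/
def phiCoeff {R : Type*} [AddCommMonoid R] (γ : Fin N → R) (j : ℕ) : R :=
  ∑ k : Fin N, if (k : ℕ) + 1 = j then γ k else 0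

theorem phiCoeff_ratCast (g : Fin N → ℚ) :
    phiCoeff (fun k => (g k : ℂ)) = Rat.castHom ℂ ∘ phiCoeff g := by
  ext j
  simp [phiCoeff, apply_ite]

noncomputable def clearedProduct (γ : Fin N → ℂ) (u : Fin (N + 1) → ℂ) : ℂ[X] :=
  ∑ k : Fin N, ∑ l : Fin (N + 1), C (γ k * u l) * X ^ (N - ((k : ℕ) + 1) + l)

noncomputable def clearedInvSum (v : Fin (N + 1) → ℂ) : ℂ[X] :=
  ∑ l : Fin (N + 1), C (v l) * X ^ (N - (l : ℕ))

theorem eval_clearedProduct (γ : Fin N → ℂ) (u : Fin (N + 1) → ℂ) {z : ℂ} (hz : z ≠ 0) :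
    (clearedProduct γ u).eval z = z ^ N * (nEval γ z * pEval u z) := by
  simp only [clearedProduct, eval_finsetSum, eval_mul, eval_C, eval_pow, eval_X]
  rw [nEval, pEval, sum_mul_sum, mul_sum]
  refine sum_congr rfl fun k _ => ?_
  rw [mul_sum]
  refine sum_congr rfl fun l _ => ?_
  rw [pow_add, pow_sub₀ z hz (show (k : ℕ) + 1 ≤ N from k.isLt), inv_pow]
  ring

theorem eval_clearedInvSum (v : Fin (N + 1) → ℂ) {z : ℂ} (hz : z ≠ 0) :
    (clearedInvSum v).eval z = z ^ N * ∑ l, v l * z⁻¹ ^ (l : ℕ) := by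
  simp only [clearedInvSum, eval_finsetSum, eval_mul, eval_C, eval_pow, eval_X, mul_sum]
  refine sum_congr rfl fun l _ => ?_
  rw [pow_sub₀ z hz (Nat.le_of_lt_succ l.isLt), inv_pow]
  ring

theorem coeff_clearedProduct (γ : Fin N → ℂ) (u : Fin (N + 1) → ℂ) (m : Fin (N + 1)) :
    (clearedProduct γ u).coeff (N - m) = (hankel (phiCoeff γ) *ᵥ u) m := by
  simp only [clearedProduct, finsetSum_coeff, coeff_C_mul_X_pow, mulVec, dotProduct, hankel,
    of_apply, phiCoeff, sum_mul]
  rw [sum_comm]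
  refine sum_congr rfl fun l _ => sum_congr rfl fun k _ => ?_
  have hidx : N - m = N - ((k : ℕ) + 1) + l ↔ (k : ℕ) + 1 = l + m := by omega
  simp only [hidx, ite_mul, zero_mul]

theorem coeff_clearedInvSum (v : Fin (N + 1) → ℂ) (m : Fin (N + 1)) :
    (clearedInvSum v).coeff (N - m) = v m := by
  simp only [clearedInvSum, finsetSum_coeff, coeff_C_mul_X_pow]
  rw [sum_eq_single m (fun l _ hlm => if_neg fun h => hlm (by omega)) (by simp), if_pos rfl]

theorem hankel_mulVec_eq_neg_of_isPolyFun {γ : Fin N → ℂ} {u v : Fin (N + 1) → ℂ}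
    (h : IsPolyFun fun z => nEval γ z * pEval u z + ∑ l, v l * z⁻¹ ^ (l : ℕ)) {m : Fin (N + 1)}
    (hm : m ≠ 0) : (hankel (phiCoeff γ) *ᵥ u) m = -v m := by
  have hcoeff := h.coeff_eq_zero (Q := clearedProduct γ u + clearedInvSum v) (k := N - m)
    (fun z hz => by rw [eval_add, eval_clearedProduct γ u hz, eval_clearedInvSum v hz, mul_add])
    (by have := Fin.pos_iff_ne_zero.mpr hm; omega)
  rw [coeff_add, coeff_clearedProduct, coeff_clearedInvSum] at hcoeff
  linear_combination hcoeff

end Daubechies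

open Daubechies in
theorem daubechies_rational_general (N : ℕ) (g : Fin N → ℚ) (a b : Fin (N + 1) → ℂ)
    (ha1 : pEval a 1 = 1) (hb1 : pEval b 1 = 0)
    (hpoly : ∀ i j : Fin 2, IsPolyFun (fun z =>
      ((!![(1 : ℂ), 0; nEval (fun k => ((g k : ℚ) : ℂ)) z, 1] : Matrix (Fin 2) (Fin 2) ℂ) *
        !![pEval a z, pEval b z; -pTilde b z, pTilde a z]) i j)) :
    (∀ k : Fin (N + 1), ∃ q : ℚ, a k = (q : ℂ)) ∧
    (∀ k : Fin (N + 1), ∃ q : ℚ, b k = (q : ℂ)) := by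
  set G := phiCoeff fun k => ((g k : ℚ) : ℂ) with hGdef
  have hG : ∀ j, star (G j) = G j := by simp [G, phiCoeff_ratCast]
  have h10 : IsPolyFun fun z =>
      nEval (fun k => ((g k : ℚ) : ℂ)) z * pEval a z + ∑ l, -star (b l) * z⁻¹ ^ (l : ℕ) := by
    simpa [pTilde, mul_apply, Fin.sum_univ_two, sum_neg_distrib] using hpoly 1 0
  have h11 : IsPolyFun fun z =>
      nEval (fun k => ((g k : ℚ) : ℂ)) z * pEval b z + ∑ l, star (a l) * z⁻¹ ^ (l : ℕ) := by
    simpa [pTilde, mul_apply, Fin.sum_univ_two] using hpoly 1 1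
  have hrot : IsHankelRotation G a (star b) := fun m hm => by
    refine ⟨by simpa using hankel_mulVec_eq_neg_of_isPolyFun h10 hm, ?_⟩
    rw [hankel_mulVec_star hG, Pi.star_apply, hankel_mulVec_eq_neg_of_isPolyFun h11 hm]
    simp
  have hsa : ∑ l, a l = 1 := by simpa [pEval] using ha1
  have hsb : ∑ l, star b l = 0 := by simpa [pEval, ← star_sum] using congrArg star hb1
  have hsol := (coeffSystem_mulVec_eq_iff G a (star b) 1 0).mpr ⟨hsa, hsb, hrot⟩
  have hinj := coeffSystem_mulVec_injective hG hsa hsb hrot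
  rw [hGdef, phiCoeff_ratCast, ← coeffSystem_map] at hsol hinj
  obtain ⟨q, hq⟩ := exists_eq_comp_of_mulVec_eq (Rat.castHom ℂ) hinj
    (b := Sum.elim (Pi.single 0 1) 0) <| by
      rw [hsol]; ext (i | i) <;> by_cases hi : i = 0 <;> simp [hi]
  refine ⟨fun k => ⟨q (.inl k), congrFun hq (.inl k)⟩, fun k => ⟨q (.inr k), ?_⟩⟩
  simpa using congrArg star (congrFun hq (.inr k))

/-- Corollary 2: if `φ ∈ P⁻_N` has rational coefficients, then the unique pair `α, β ∈ P⁺_N`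
given by Theorem 1 has rational coefficients as well. -/
theorem daubechies_rational (N : ℕ) (hN : 1 ≤ N) (g : Fin N → ℚ)
    (hg : g ≠ 0) (a b : Fin (N + 1) → ℂ)
    (hunit : ∀ z : ℂ, z ≠ 0 →
      pEval a z * pTilde a z + pEval b z * pTilde b z = 1)
    (ha1 : pEval a 1 = 1) (hb1 : pEval b 1 = 0)
    (hpoly : ∀ i j : Fin 2, IsPolyFun (fun z =>
      ((!![(1 : ℂ), 0; nEval (fun k => ((g k : ℚ) : ℂ)) z, 1] : Matrix (Fin 2) (Fin 2) ℂ) *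
        !![pEval a z, pEval b z; -pTilde b z, pTilde a z]) i j)) :
    (∀ k : Fin (N + 1), ∃ q : ℚ, a k = (q : ℂ)) ∧
    (∀ k : Fin (N + 1), ∃ q : ℚ, b k = (q : ℂ)) :=
  daubechies_rational_general N g a b ha1 hb1 hpoly
end

section
/- Let α, β ∈ P^+_N satisfy αα̃ + ββ̃ = 1 on ℂ\{0} and α(0) ≠ 0. Let f(z) = β̃(z)/α(z) in a deleted neighborhood of 0, and let φ(z) = [f(z)]^- be the sum of the negative-power terms of the Laurent expansion of f around 0. Then φ ∈ P^-_N (the negative part has degree at most N) and both φα - β̃ and φβ + α̃ are polynomials in nonnegative powers of z. -/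
open Complex Finset Matrix

open Topology

/-!
Multiplying by `z^N` turns everything into polynomials: with `A`, `B` the polynomials of
`α`, `β` and `Ã = zᴺ α̃`, `B̃ = zᴺ β̃`, the unit relation reads `A Ã + B B̃ = Xᴺ`. Since
`A(0) ≠ 0`, `A` is a unit modulo `Xᴺ`, so `B̃ = P A + Xᴺ s` with `deg P < N`. Then
`β̃/α = P/zᴺ + s/A` with `s/A` analytic at `0`, so `φ = P/zᴺ ∈ P⁻_N`, and `φα - β̃ = -s`.
Finally `A (P B + Ã) = Xᴺ (1 - s B)`, so coprimality gives `Xᴺ ∣ P B + Ã`, which is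
`φβ + α̃ = (P B + Ã)/zᴺ` being a polynomial.
-/

open Polynomial

namespace Polynomial

theorem isCoprime_X_pow_of_eval_zero_ne_zero {K : Type*} [Field K] {p : K[X]}
    (hp : p.eval 0 ≠ 0) (n : ℕ) : IsCoprime (X ^ n) p :=
  (irreducible_X.coprime_iff_not_dvd.2 (by rwa [X_dvd_iff, coeff_zero_eq_eval_zero])).pow_left

theorem exists_degree_lt_and_eq_mul_add_mul_of_isCoprime {R : Type*} [CommRing R] [Nontrivial R]
    {p q : R[X]} (hq : q.Monic) (hqp : IsCoprime q p) (f : R[X]) :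
    ∃ r s : R[X], r.degree < q.degree ∧ f = r * p + q * s := by
  obtain ⟨u, v, huv⟩ := hqp
  refine ⟨f * v %ₘ q, f * u + f * v /ₘ q * p, degree_modByMonic_lt _ hq, ?_⟩
  linear_combination (-f) * huv - p * modByMonic_add_div (f * v) q

end Polynomial

noncomputable def pPoly {N : ℕ} (a : Fin (N + 1) → ℂ) : ℂ[X] :=
  ∑ k : Fin (N + 1), C (a k) * X ^ (k : ℕ)

/-- The polynomial `Xᴺ α̃ = ∑ conj(aₖ) X^(N-k)`. -/
noncomputable def pTildePoly {N : ℕ} (a : Fin (N + 1) → ℂ) : ℂ[X] :=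
  ∑ k : Fin (N + 1), C (starRingEnd ℂ (a k)) * X ^ (N - (k : ℕ))

theorem pEval_eq_eval_pPoly {N : ℕ} (a : Fin (N + 1) → ℂ) (z : ℂ) :
    pEval a z = (pPoly a).eval z := by
  simp [pEval, pPoly, eval_finsetSum]

theorem pTilde_eq_eval_pTildePoly_mul {N : ℕ} (a : Fin (N + 1) → ℂ) {z : ℂ} (hz : z ≠ 0) :
    pTilde a z = (pTildePoly a).eval z * z⁻¹ ^ N := by
  rw [pTildePoly, eval_finsetSum, Finset.sum_mul]
  refine Finset.sum_congr rfl fun k _ => ?_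
  rw [eval_mul, eval_C, eval_pow, eval_X, pow_sub₀ z hz (Nat.lt_succ_iff.mp k.isLt)]
  simp only [inv_pow]
  field_simp

theorem pPoly_mul_pTildePoly_add_eq_X_pow {N : ℕ} {a b : Fin (N + 1) → ℂ}
    (hunit : ∀ z : ℂ, z ≠ 0 → pEval a z * pTilde a z + pEval b z * pTilde b z = 1) :
    pPoly a * pTildePoly a + pPoly b * pTildePoly b = X ^ N := by
  refine eq_of_infinite_eval_eq _ _ ((Set.finite_singleton 0).infinite_compl.mono fun z hz => ?_)
  have hz : z ≠ 0 := hz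
  have h := hunit z hz
  simp only [pEval_eq_eval_pPoly, pTilde_eq_eval_pTildePoly_mul _ hz, inv_pow] at h
  simp only [Set.mem_ofPred_eq, eval_add, eval_mul, eval_pow, eval_X]
  field_simp at h
  linear_combination h

/-- The coefficients of `P(z) / zᴺ` in the basis `z⁻¹, …, z⁻ᴺ` of `P⁻_N`. -/
def principalCoeffs (N : ℕ) (P : ℂ[X]) : Fin N → ℂ :=
  fun k => P.coeff (N - 1 - k)

theorem nEval_principalCoeffs {N : ℕ} {P : ℂ[X]} (hP : P.degree < N) {z : ℂ} (hz : z ≠ 0) :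
    nEval (principalCoeffs N P) z = P.eval z * z⁻¹ ^ N := by
  have hP' : P.eval z = ∑ j ∈ range N, P.coeff j * z ^ j := by
    rcases eq_or_ne P 0 with rfl | hP0
    · simp
    · exact eval_eq_sum_range' ((natDegree_lt_iff_degree_lt hP0).2 hP) z
  rw [hP', Finset.sum_mul, ← Finset.sum_range_reflect, nEval]
  unfold principalCoeffs
  rw [Fin.sum_univ_eq_sum_range (fun k => P.coeff (N - 1 - k) * z⁻¹ ^ (k + 1))]
  refine Finset.sum_congr rfl fun k hk => ?_
  have hsplit : z⁻¹ ^ N = z⁻¹ ^ (N - 1 - k) * z⁻¹ ^ (k + 1) := by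
    rw [← pow_add]; congr 1; have := mem_range.1 hk; omega
  rw [hsplit, mul_assoc, ← mul_assoc (z ^ _), ← mul_pow, mul_inv_cancel₀ hz, one_pow, one_mul]

theorem isPolyFun_of_X_pow_dvd {N : ℕ} {f : ℂ → ℂ} {q : ℂ[X]} (hq : X ^ N ∣ q)
    (hf : ∀ z : ℂ, z ≠ 0 → f z = q.eval z * z⁻¹ ^ N) : IsPolyFun f := by
  obtain ⟨t, rfl⟩ := hq
  refine ⟨t, fun z hz => ?_⟩
  rw [hf z hz, eval_mul, eval_pow, eval_X, inv_pow]
  field_simp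

/-- If `α(0) ≠ 0`, then the principal part `φ = [β̃/α]⁻` of `f = β̃/α` at `0` is a Laurent
polynomial in `z⁻¹, …, z⁻ᴺ`, and `φα - β̃` and `φβ + α̃` have only nonnegative powers. -/
theorem daubechies_principal_part (N : ℕ) (a b : Fin (N + 1) → ℂ)
    (hunit : ∀ z : ℂ, z ≠ 0 →
      pEval a z * pTilde a z + pEval b z * pTilde b z = 1)
    (ha0 : pEval a 0 ≠ 0) :
    ∃ g : Fin N → ℂ,
      (∃ F : ℂ → ℂ, AnalyticAt ℂ F 0 ∧
        ∀ᶠ z in 𝓝[≠] (0 : ℂ), pTilde b z / pEval a z = nEval g z + F z) ∧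
      IsPolyFun (fun z => nEval g z * pEval a z - pTilde b z) ∧
      IsPolyFun (fun z => nEval g z * pEval b z + pTilde a z) := by
  rw [pEval_eq_eval_pPoly] at ha0
  have hcop := isCoprime_X_pow_of_eval_zero_ne_zero ha0 N
  obtain ⟨P, s, hPdeg, hdiv⟩ :=
    exists_degree_lt_and_eq_mul_add_mul_of_isCoprime (monic_X_pow N) hcop (pTildePoly b)
  rw [degree_X_pow] at hPdeg
  have hdvd : X ^ N ∣ P * pPoly b + pTildePoly a :=
    hcop.dvd_of_dvd_mul_left ⟨1 - s * pPoly b, by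
      linear_combination (-pPoly b) * hdiv + pPoly_mul_pTildePoly_add_eq_X_pow hunit⟩
  have hφ (z : ℂ) (hz : z ≠ 0) := nEval_principalCoeffs hPdeg hz
  have hα := pEval_eq_eval_pPoly a
  have hβ := pEval_eq_eval_pPoly b
  have hα' (z : ℂ) (hz : z ≠ 0) := pTilde_eq_eval_pTildePoly_mul a hz
  have hβ' (z : ℂ) (hz : z ≠ 0) := pTilde_eq_eval_pTildePoly_mul b hz
  refine ⟨principalCoeffs N P, ⟨fun z => s.eval z / (pPoly a).eval z, ?_, ?_⟩,
    isPolyFun_of_X_pow_dvd (q := P * pPoly a - pTildePoly b) ⟨-s, by rw [hdiv]; ring⟩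
      fun z hz => ?_,
    isPolyFun_of_X_pow_dvd hdvd fun z hz => ?_⟩
  · exact (AnalyticOnNhd.eval_polynomial s 0 trivial).div
      (AnalyticOnNhd.eval_polynomial _ 0 trivial) ha0
  · filter_upwards [self_mem_nhdsWithin, nhdsWithin_le_nhds
      ((pPoly a).continuous.continuousAt.eventually_ne ha0)] with z (hz : z ≠ 0) hαz
    rw [hβ' z hz, hα, hφ z hz, hdiv, eval_add, eval_mul, eval_mul, eval_pow, eval_X, inv_pow]
    field_simp
  · simp only [hφ z hz, hα, hβ' z hz, eval_sub, eval_mul]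
    ring
  · simp only [hφ z hz, hβ, hα' z hz, eval_add, eval_mul]
    ring
end

section
/- Let α, β ∈ P^+_N satisfy αα̃ + ββ̃ = 1 on ℂ\{0}, and suppose α_0, β_0 are polynomials with α α_0 + β β_0 = 1 (a Bézout relation). If φ ∈ P^- is any Laurent polynomial with only negative powers such that φα - β̃ and φβ + α̃ have only nonnegative powers of z, then φ = [α_0 β̃ - β_0 α̃]^-, i.e., φ equals the negative-power part of α_0 β̃ - β_0 α̃. In particular, such φ is unique. -/
/-!
Writing `φ = q(z⁻¹)` with `q(0) = 0`, the Bézout relation gives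
`α₀ β̃ - β₀ α̃ - φ = -α₀ (φα - β̃) - β₀ (φβ + α̃)`, a polynomial in `z`. Two admissible `φ`
therefore differ by a function that is at once a polynomial in `z` and a polynomial in `z⁻¹`
without constant term; comparing degrees after multiplying by a power of `z` shows it is zero.
-/

open Complex Finset Matrix

open Polynomial in
theorem Polynomial.eq_zero_of_eval_inv_eq_eval {K : Type*} [Field K] [Infinite K]
    {p q : K[X]} (hq : q.coeff 0 = 0) (h : ∀ z : K, z ≠ 0 → q.eval z⁻¹ = p.eval z) :
    q = 0 := by
  set n := p.natDegree
  have hreflect : reflect n p = X ^ n * q := by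
    refine eq_of_infinite_eval_eq _ _ (Set.Infinite.mono ?_ (Set.finite_singleton 0).infinite_compl)
    intro w (hw : w ≠ 0)
    let := invertibleOfNonzero (inv_ne_zero hw)
    have hmul := eval₂_reflect_mul_pow (RingHom.id K) w⁻¹ n p le_rfl
    rw [invOf_eq_inv, inv_inv, ← eval, ← eval, ← h w⁻¹ (inv_ne_zero hw), inv_inv,
      inv_pow, ← div_eq_mul_inv, div_eq_iff (pow_ne_zero n hw)] at hmul
    simp only [Set.mem_ofPred_eq, eval_mul, eval_pow, eval_X, hmul, mul_comm]
  by_contra hq0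
  have hdeg : n + q.natDegree ≤ n := by
    rw [← natDegree_X_pow (R := K) n, ← natDegree_mul (pow_ne_zero n X_ne_zero) hq0,
      ← hreflect, natDegree_X_pow]
    exact natDegree_reflect_le.trans (max_self n).le
  exact hq0 (by rw [eq_C_of_natDegree_eq_zero (p := q) (by omega), hq, C_0])

noncomputable def nEvalPoly {M : ℕ} (g : Fin M → ℂ) : Polynomial ℂ :=
  ∑ k : Fin M, Polynomial.C (g k) * Polynomial.X ^ ((k : ℕ) + 1)

theorem nEval_eq_eval_inv {M : ℕ} (g : Fin M → ℂ) (z : ℂ) :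
    nEval g z = (nEvalPoly g).eval z⁻¹ := by
  simp [nEval, nEvalPoly, Polynomial.eval_finsetSum]

theorem coeff_zero_nEvalPoly {M : ℕ} (g : Fin M → ℂ) : (nEvalPoly g).coeff 0 = 0 := by
  simp [nEvalPoly, Polynomial.coeff_X_pow]

theorem nEval_eq_of_isPolyFun_sub {M M' : ℕ} {g : Fin M → ℂ} {g' : Fin M' → ℂ}
    (h : IsPolyFun fun z => nEval g z - nEval g' z) :
    ∀ z : ℂ, z ≠ 0 → nEval g z = nEval g' z := by
  obtain ⟨p, hp⟩ := h
  have hzero : nEvalPoly g - nEvalPoly g' = 0 :=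
    Polynomial.eq_zero_of_eval_inv_eq_eval
      (by rw [Polynomial.coeff_sub, coeff_zero_nEvalPoly, coeff_zero_nEvalPoly, sub_zero])
      fun z hz => by rw [Polynomial.eval_sub, ← nEval_eq_eval_inv, ← nEval_eq_eval_inv, ← hp z hz]
  intro z _
  rw [nEval_eq_eval_inv, nEval_eq_eval_inv, sub_eq_zero.mp hzero]

theorem IsPolyFun.sub_s8 {f f' : ℂ → ℂ} (hf : IsPolyFun f) (hf' : IsPolyFun f') :
    IsPolyFun fun z => f z - f' z := by
  obtain ⟨p, hp⟩ := hf
  obtain ⟨p', hp'⟩ := hf'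
  exact ⟨p - p', fun z hz => by rw [Polynomial.eval_sub, ← hp z hz, ← hp' z hz]⟩

theorem isPolyFun_bezout_sub_nEval {N M : ℕ} {a b : Fin (N + 1) → ℂ} {α₀ β₀ : Polynomial ℂ}
    (hbezout : ∀ z : ℂ, pEval a z * α₀.eval z + pEval b z * β₀.eval z = 1)
    {g : Fin M → ℂ}
    (h1 : IsPolyFun (fun z => nEval g z * pEval a z - pTilde b z))
    (h2 : IsPolyFun (fun z => nEval g z * pEval b z + pTilde a z)) :
    IsPolyFun (fun z =>
      (α₀.eval z * pTilde b z - β₀.eval z * pTilde a z) - nEval g z) := by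
  obtain ⟨p₁, hp₁⟩ := h1
  obtain ⟨p₂, hp₂⟩ := h2
  refine ⟨-(α₀ * p₁) - β₀ * p₂, fun z hz => ?_⟩
  simp only [Polynomial.eval_sub, Polynomial.eval_neg, Polynomial.eval_mul]
  linear_combination -α₀.eval z * hp₁ z hz - β₀.eval z * hp₂ z hz + nEval g z * hbezout z

theorem daubechies_phi_unique_general (N : ℕ) (a b : Fin (N + 1) → ℂ)
    (α₀ β₀ : Polynomial ℂ)
    (hbezout : ∀ z : ℂ, pEval a z * α₀.eval z + pEval b z * β₀.eval z = 1)
    (M : ℕ) (g : Fin M → ℂ)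
    (h1 : IsPolyFun (fun z => nEval g z * pEval a z - pTilde b z))
    (h2 : IsPolyFun (fun z => nEval g z * pEval b z + pTilde a z)) :
    IsPolyFun (fun z =>
      (α₀.eval z * pTilde b z - β₀.eval z * pTilde a z) - nEval g z) ∧
    ∀ (M' : ℕ) (g' : Fin M' → ℂ),
      IsPolyFun (fun z => nEval g' z * pEval a z - pTilde b z) →
      IsPolyFun (fun z => nEval g' z * pEval b z + pTilde a z) →
      ∀ z : ℂ, z ≠ 0 → nEval g' z = nEval g z := by
  have hg := isPolyFun_bezout_sub_nEval hbezout h1 h2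
  refine ⟨hg, fun M' g' h1' h2' => nEval_eq_of_isPolyFun_sub ?_⟩
  have hdiff := hg.sub_s8 (isPolyFun_bezout_sub_nEval hbezout h1' h2')
  simpa only [sub_sub_sub_cancel_left] using hdiff

/-- Uniqueness of `φ` in Theorem 2, via a Bézout relation `α α₀ + β β₀ = 1`: any
`φ ∈ P⁻` making `φα - β̃` and `φβ + α̃` have only nonnegative powers equals the
negative-power part of `α₀ β̃ - β₀ α̃`; in particular, such `φ` is unique. -/
theorem daubechies_phi_unique (N : ℕ) (a b : Fin (N + 1) → ℂ)
    (hunit : ∀ z : ℂ, z ≠ 0 →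
      pEval a z * pTilde a z + pEval b z * pTilde b z = 1)
    (α₀ β₀ : Polynomial ℂ)
    (hbezout : ∀ z : ℂ, pEval a z * α₀.eval z + pEval b z * β₀.eval z = 1)
    (M : ℕ) (g : Fin M → ℂ)
    (h1 : IsPolyFun (fun z => nEval g z * pEval a z - pTilde b z))
    (h2 : IsPolyFun (fun z => nEval g z * pEval b z + pTilde a z)) :
    IsPolyFun (fun z =>
      (α₀.eval z * pTilde b z - β₀.eval z * pTilde a z) - nEval g z) ∧
    ∀ (M' : ℕ) (g' : Fin M' → ℂ),
      IsPolyFun (fun z => nEval g' z * pEval a z - pTilde b z) →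
      IsPolyFun (fun z => nEval g' z * pEval b z + pTilde a z) →
      ∀ z : ℂ, z ≠ 0 → nEval g' z = nEval g z :=
  daubechies_phi_unique_general N a b α₀ β₀ hbezout M g h1 h2
end

section
/- If H₁ and H₂ are Haar wavelet matrices of rank m (complex m×m matrices with H H* = mI_m and row sums mδ_{i0}), then H₁ = diag(1, U) · H₂ for some unitary (m-1)×(m-1) matrix U. -/
open Complex Finset Matrix

/-!
Since `H₂ H₂ᴴ = m • 1`, the matrix `W = m⁻¹ • H₁ H₂ᴴ` satisfies `W H₂ = H₁`, and comparing
`H₁ H₁ᴴ = W (H₂ H₂ᴴ) Wᴴ` shows that `W` is unitary. The row-sum condition says that `H₁` and `H₂`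
both send the all-ones vector to `m e₀`, so `W e₀ = e₀`; then also `Wᴴ e₀ = e₀`, i.e. the first
row and the first column of `W` are both `e₀`, and `W = diag(1, U)` with `U` unitary.
-/

namespace Matrix

variable {m K : Type*} [Fintype m] [DecidableEq m]

section Field

variable [Field K] [StarRing K]

theorem conjTranspose_mul_self_eq_smul_one {H : Matrix m m K} {c : K} (hc : c ≠ 0)
    (hH : H * Hᴴ = c • 1) : Hᴴ * H = c • 1 := by
  have hinv : H * (c⁻¹ • Hᴴ) = 1 := by
    rw [Matrix.mul_smul, hH, smul_smul, inv_mul_cancel₀ hc, one_smul]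
  calc Hᴴ * H = c • (c⁻¹ • Hᴴ * H) := by
        rw [Matrix.smul_mul, smul_smul, mul_inv_cancel₀ hc, one_smul]
    _ = c • 1 := by rw [mul_eq_one_comm.mp hinv]

theorem exists_mul_eq_of_mul_conjTranspose_eq_smul_one {H₁ H₂ : Matrix m m K} {c : K}
    (hc : c ≠ 0) (h₂ : H₂ * H₂ᴴ = c • 1) : ∃ W, W * H₂ = H₁ :=
  ⟨c⁻¹ • (H₁ * H₂ᴴ), by
    rw [Matrix.smul_mul, Matrix.mul_assoc, conjTranspose_mul_self_eq_smul_one hc h₂,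
      Matrix.mul_smul, Matrix.mul_one, smul_smul, inv_mul_cancel₀ hc, one_smul]⟩

end Field

section Domain

variable [CommRing K] [IsDomain K]

theorem mem_unitaryGroup_of_mul_eq [StarRing K] {W H₁ H₂ : Matrix m m K} {c : K} (hc : c ≠ 0)
    (h₁ : H₁ * H₁ᴴ = c • 1) (h₂ : H₂ * H₂ᴴ = c • 1) (hW : W * H₂ = H₁) :
    W ∈ unitaryGroup m K := by
  rw [mem_unitaryGroup_iff, star_eq_conjTranspose]
  refine smul_right_injective _ hc ?_
  calc c • (W * Wᴴ) = W * (H₂ * H₂ᴴ) * Wᴴ := by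
        rw [h₂, Matrix.mul_smul, Matrix.mul_one, Matrix.smul_mul]
    _ = H₁ * H₁ᴴ := by rw [← hW, conjTranspose_mul, Matrix.mul_assoc, Matrix.mul_assoc,
        Matrix.mul_assoc]
    _ = c • 1 := h₁

theorem col_eq_single_of_mul_eq {W H₁ H₂ : Matrix m m K} {c : K} {i₀ : m} (hc : c ≠ 0)
    (h₁ : H₁ *ᵥ 1 = Pi.single i₀ c) (h₂ : H₂ *ᵥ 1 = Pi.single i₀ c) (hW : W * H₂ = H₁) :
    W.col i₀ = Pi.single i₀ 1 := by
  have hsingle : Pi.single i₀ c = c • Pi.single i₀ (1 : K) := by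
    rw [← Pi.single_smul', smul_eq_mul, mul_one]
  refine smul_right_injective _ hc ?_
  calc c • W.col i₀ = W *ᵥ (H₂ *ᵥ 1) := by rw [h₂, hsingle, mulVec_smul, mulVec_single_one]
    _ = c • Pi.single i₀ 1 := by rw [mulVec_mulVec, hW, h₁, hsingle]

end Domain

theorem mulVec_one_eq_single_of_sum_eq_ite {α : Type*} [NonAssocSemiring α] {H : Matrix m m α}
    {i₀ : m} {c : α}
    (h : ∀ i, ∑ j, H i j = if i = i₀ then c else 0) : H *ᵥ 1 = Pi.single i₀ c :=
  funext fun i => by simp [mulVec, dotProduct, h, Pi.single_apply]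

section Unitary

variable {α : Type*} [CommRing α] [StarRing α]

theorem conjTranspose_mulVec_eq_self_of_mulVec_eq_self {W : Matrix m m α}
    (hW : W ∈ unitaryGroup m α) {v : m → α} (hv : W *ᵥ v = v) : Wᴴ *ᵥ v = v := by
  conv_lhs => rw [← hv]
  rw [mulVec_mulVec, ← star_eq_conjTranspose, Unitary.star_mul_self_of_mem hW, one_mulVec]

theorem row_eq_single_of_col_eq_single {W : Matrix m m α} (hW : W ∈ unitaryGroup m α) {i₀ : m}
    (hcol : W.col i₀ = Pi.single i₀ 1) : W.row i₀ = Pi.single i₀ 1 := by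
  rw [← mulVec_single_one] at hcol
  have hstar := conjTranspose_mulVec_eq_self_of_mulVec_eq_self hW hcol
  rw [mulVec_single_one] at hstar
  funext j
  simpa [Pi.single_apply, apply_ite star] using congrArg star (congrFun hstar j)

end Unitary

def blockDiagOne {α : Type*} [Zero α] [One α] {n : ℕ} (U : Matrix (Fin n) (Fin n) α) :
    Matrix (Fin (n + 1)) (Fin (n + 1)) α :=
  of fun i j =>
    if hi : i = 0 then (if j = 0 then 1 else 0)
    else if hj : j = 0 then 0 else U (i.pred hi) (j.pred hj)

section Fin

variable {α : Type*} {n : ℕ}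

theorem eq_blockDiagOne_submatrix_succ [Zero α] [One α]
    {W : Matrix (Fin (n + 1)) (Fin (n + 1)) α}
    (hcol : W.col 0 = Pi.single 0 1) (hrow : W.row 0 = Pi.single 0 1) :
    W = blockDiagOne (W.submatrix Fin.succ Fin.succ) := by
  have hcol' (i : Fin (n + 1)) : W i 0 = (Pi.single 0 1 : Fin (n + 1) → α) i :=
    congrFun hcol i
  have hrow' (j : Fin (n + 1)) : W 0 j = (Pi.single 0 1 : Fin (n + 1) → α) j :=
    congrFun hrow j
  ext i j
  induction i using Fin.cases <;> induction j using Fin.cases <;>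
    simp [blockDiagOne, hcol', hrow', Fin.succ_ne_zero]

theorem submatrix_succ_mem_unitaryGroup [CommRing α] [StarRing α]
    {W : Matrix (Fin (n + 1)) (Fin (n + 1)) α} (hW : W ∈ unitaryGroup (Fin (n + 1)) α)
    (hcol : W.col 0 = Pi.single 0 1) :
    W.submatrix Fin.succ Fin.succ ∈ unitaryGroup (Fin n) α := by
  rw [mem_unitaryGroup_iff] at hW ⊢
  have hsucc : ∀ i : Fin n, W i.succ 0 = 0 := fun i => by
    simpa [Fin.succ_ne_zero] using congrFun hcol i.succ
  ext i j
  simpa [mul_apply, Fin.sum_univ_succ, hsucc, one_apply] using congrFun (congrFun hW i.succ) j.succ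

end Fin

end Matrix

/-- Any two Haar wavelet matrices of rank `m = n + 1` differ by left multiplication by a
block-diagonal matrix `diag(1, U)` with `U` unitary of size `(m-1) × (m-1)`. -/
theorem haar_matrices_related_by_unitary (n : ℕ)
    (H₁ H₂ : Matrix (Fin (n + 1)) (Fin (n + 1)) ℂ)
    (hquad₁ : H₁ * H₁ᴴ = ((n + 1 : ℕ) : ℂ) • (1 : Matrix (Fin (n + 1)) (Fin (n + 1)) ℂ))
    (hlin₁ : ∀ i : Fin (n + 1), ∑ j : Fin (n + 1), H₁ i j =
      if i = 0 then ((n + 1 : ℕ) : ℂ) else 0)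
    (hquad₂ : H₂ * H₂ᴴ = ((n + 1 : ℕ) : ℂ) • (1 : Matrix (Fin (n + 1)) (Fin (n + 1)) ℂ))
    (hlin₂ : ∀ i : Fin (n + 1), ∑ j : Fin (n + 1), H₂ i j =
      if i = 0 then ((n + 1 : ℕ) : ℂ) else 0) :
    ∃ U : Matrix (Fin n) (Fin n) ℂ, U ∈ Matrix.unitaryGroup (Fin n) ℂ ∧
      H₁ = (Matrix.of fun i j : Fin (n + 1) =>
        if hi : i = 0 then (if j = 0 then (1 : ℂ) else 0)
        else if hj : j = 0 then 0 else U (i.pred hi) (j.pred hj)) * H₂ := by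
  set c : ℂ := ((n + 1 : ℕ) : ℂ)
  have hc : c ≠ 0 := Nat.cast_ne_zero.mpr n.succ_ne_zero
  obtain ⟨W, hW⟩ := exists_mul_eq_of_mul_conjTranspose_eq_smul_one (H₁ := H₁) hc hquad₂
  have hWu := mem_unitaryGroup_of_mul_eq hc hquad₁ hquad₂ hW
  have hcol := col_eq_single_of_mul_eq hc (mulVec_one_eq_single_of_sum_eq_ite hlin₁)
    (mulVec_one_eq_single_of_sum_eq_ite hlin₂) hW
  refine ⟨_, submatrix_succ_mem_unitaryGroup hWu hcol, ?_⟩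
  rw [← hW]
  exact congrArg (· * H₂)
    (eq_blockDiagOne_submatrix_succ hcol (row_eq_single_of_col_eq_single hWu hcol))
end

section
/- Let α, β ∈ P^+_N satisfy αα̃ + ββ̃ = 1 on ℂ\{0} and |α(0)|+|β(0)| > 0. Let φ ∈ P^-_N be the unique element such that M(z) := [[1,0],[φ,1]]·[[α,β],[-β̃,α̃]] has only nonnegative powers, and let (α',β') be the unique pair in P^+_N with α'α̃' + β'β̃' = 1, α'(1)=1, β'(1)=0 and [[1,0],[φ,1]]·[[α',β'],[-β̃',α̃']] having only nonnegative powers. Then (α,β) = (α',β')·U where U = [[α(1),β(1)],[-β̃(1),α̃(1)]] is unitary with determinant 1. -/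
open Complex Finset Matrix

/-!
Write `M = [[α, β], [-β̃, α̃]]`, `M'` for its primed analogue and `L = [[1, 0], [φ, 1]]`.
Since `det L = det M' = 1`, the matrix `V = adj M' · M = adj (L M') · (L M)` is polynomial in `z`.
Matrices of the shape `[[A, B], [-B̃, Ã]]` are closed under adjugates and products, so `V` has
this shape as well; each of its entries is then polynomial both in `z` and in `z⁻¹`, hence
constant. Thus `V = V(1) = M(1)` because `M'(1) = 1`, and `M = M' V = M' · M(1)`.
-/

open ComplexConjugate

open Polynomial in
theorem Polynomial.natDegree_eq_zero_of_eval_eq_eval_inv_s14 {K : Type*} [Field K] [Infinite K]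
    {p q : K[X]} (h : ∀ w : K, w ≠ 0 → p.eval w = q.eval w⁻¹) : p.natDegree = 0 := by
  have hrev : p * X ^ q.natDegree = q.reverse := by
    refine eq_of_infinite_eval_eq _ _ ((Set.finite_singleton 0).infinite_compl.mono fun w hw => ?_)
    have hw : w ≠ 0 := hw
    have := invertibleOfNonzero hw
    have hq := eval₂_reverse_mul_pow (RingHom.id K) w⁻¹ q
    simp only [invOf_eq_inv, inv_inv, eval₂_id, inv_pow] at hq
    simp [h w hw, ← hq, pow_ne_zero _ hw]
  rcases eq_or_ne p 0 with rfl | hp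
  · simp
  have := natDegree_mul_X_pow q.natDegree hp
  have := q.reverse_natDegree_le
  grind

/-- The paper's `f̃`. -/
noncomputable def paraconj (f : ℂ → ℂ) (z : ℂ) : ℂ := conj (f (conj z)⁻¹)

@[simp]
lemma paraconj_apply_one (f : ℂ → ℂ) : paraconj f 1 = conj (f 1) := by simp [paraconj]

@[simp]
lemma paraconj_paraconj (f : ℂ → ℂ) : paraconj (paraconj f) = f := by
  ext z; simp [paraconj]

lemma paraconj_add (f g : ℂ → ℂ) : paraconj (f + g) = paraconj f + paraconj g := by
  ext z; simp [paraconj]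

lemma paraconj_sub (f g : ℂ → ℂ) : paraconj (f - g) = paraconj f - paraconj g := by
  ext z; simp [paraconj]

lemma paraconj_neg (f : ℂ → ℂ) : paraconj (-f) = -paraconj f := by
  ext z; simp [paraconj]

lemma paraconj_mul (f g : ℂ → ℂ) : paraconj (f * g) = paraconj f * paraconj g := by
  ext z; simp [paraconj]

lemma paraconj_pEval {N : ℕ} (a : Fin (N + 1) → ℂ) : paraconj (pEval a) = pTilde a := by
  ext z; simp [paraconj, pEval, pTilde, map_sum]

def polyFunSubring : Subring (ℂ → ℂ) where
  carrier := {f | IsPolyFun f}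
  mul_mem' := by
    rintro f g ⟨p, hp⟩ ⟨q, hq⟩
    exact ⟨p * q, fun z hz => by simp [hp z hz, hq z hz]⟩
  one_mem' := ⟨1, fun z _ => by simp⟩
  add_mem' := by
    rintro f g ⟨p, hp⟩ ⟨q, hq⟩
    exact ⟨p + q, fun z hz => by simp [hp z hz, hq z hz]⟩
  zero_mem' := ⟨0, fun z _ => by simp⟩
  neg_mem' := by
    rintro f ⟨p, hp⟩
    exact ⟨-p, fun z hz => by simp [hp z hz]⟩

lemma mem_polyFunSubring {f : ℂ → ℂ} : f ∈ polyFunSubring ↔ IsPolyFun f := Iff.rfl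

lemma IsPolyFun.neg {f : ℂ → ℂ} (hf : IsPolyFun f) : IsPolyFun (-f) := polyFunSubring.neg_mem hf

/-- `paraconj f` being polynomial in `z` makes `f` polynomial in `z⁻¹`. -/
lemma IsPolyFun.eq_apply_one_of_paraconj {f : ℂ → ℂ} (hf : IsPolyFun f)
    (hf' : IsPolyFun (paraconj f)) {z : ℂ} (hz : z ≠ 0) : f z = f 1 := by
  obtain ⟨p, hp⟩ := hf
  obtain ⟨q, hq⟩ := hf'
  have hdeg : (p.map (starRingEnd ℂ)).natDegree = 0 := by
    refine Polynomial.natDegree_eq_zero_of_eval_eq_eval_inv_s14 (q := q) fun w hw => ?_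
    rw [← hq _ (inv_ne_zero hw), paraconj, map_inv₀, inv_inv, hp _ ((map_ne_zero _).2 hw),
      Polynomial.eval_map, ← Polynomial.eval₂_hom, Complex.conj_conj]
  rw [Polynomial.natDegree_map] at hdeg
  rw [hp z hz, hp 1 one_ne_zero, Polynomial.eq_C_of_natDegree_eq_zero hdeg]
  simp

section MatrixFunctions

variable {α R n : Type*} [CommRing R] [Fintype n] {S : Subring (α → R)}
  {X Y : α → Matrix n n R}

lemma Subring.matrix_mul_apply_mem (hX : ∀ i j, (fun z => X z i j) ∈ S)
    (hY : ∀ i j, (fun z => Y z i j) ∈ S) (i j : n) : (fun z => (X z * Y z) i j) ∈ S := by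
  have : (fun z => (X z * Y z) i j) = ∑ k, (fun z => X z i k) * (fun z => Y z k j) := by
    ext z; simp [Matrix.mul_apply]
  exact this ▸ S.sum_mem fun k _ => S.mul_mem (hX i k) (hY k j)

lemma Subring.adjugate_apply_mem [DecidableEq n] (hX : ∀ i j, (fun z => X z i j) ∈ S) (i j : n) :
    (fun z => adjugate (X z) i j) ∈ S := by
  let X' : Matrix n n S := Matrix.of fun i j => ⟨_, hX i j⟩
  have hX' (z : α) : ((Pi.evalRingHom (fun _ => R) z).comp S.subtype).mapMatrix X' = X z := rfl
  have : (fun z => adjugate (X z) i j) = ((adjugate X' i j : S) : α → R) := by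
    ext z; rw [← hX', ← RingHom.map_adjugate]; rfl
  exact this ▸ (adjugate X' i j).2

end MatrixFunctions

lemma Matrix.adjugate_mul_mul_mul_cancel {R n : Type*} [CommRing R] [Fintype n] [DecidableEq n]
    {A : Matrix n n R} (hA : A.det = 1) (X Y : Matrix n n R) :
    adjugate (A * X) * (A * Y) = adjugate X * Y := by
  rw [adjugate_mul_distrib, Matrix.mul_assoc, ← Matrix.mul_assoc (adjugate A), adjugate_mul, hA,
    one_smul, Matrix.one_mul]

lemma Matrix.mem_specialUnitaryGroup_fin_two {R : Type*} [CommRing R] [StarRing R] {u v : R}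
    (h : u * star u + v * star v = 1) :
    !![u, v; -star v, star u] ∈ specialUnitaryGroup (Fin 2) R := by
  refine mem_specialUnitaryGroup_iff.mpr ⟨mem_unitaryGroup_iff.mpr ?_, ?_⟩
  · ext i j
    fin_cases i <;> fin_cases j <;> simp [Matrix.mul_apply, mul_comm] <;> linear_combination h
  · simpa [det_fin_two_of, mul_comm] using h

noncomputable def paraMat (A B : ℂ → ℂ) (z : ℂ) : Matrix (Fin 2) (Fin 2) ℂ :=
  !![A z, B z; -paraconj B z, paraconj A z]

section ParaMat

variable (A B C D : ℂ → ℂ) (z : ℂ)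

lemma det_paraMat : (paraMat A B z).det = (A * paraconj A + B * paraconj B) z := by
  simp [paraMat, det_fin_two_of]

lemma adjugate_paraMat : adjugate (paraMat A B z) = paraMat (paraconj A) (-B) z := by
  simp [paraMat, adjugate_fin_two_of, paraconj_neg]

lemma paraMat_mul_paraMat : paraMat A B z * paraMat C D z =
    paraMat (A * C - B * paraconj D) (A * D + B * paraconj C) z := by
  ext i j
  fin_cases i <;> fin_cases j <;>
    simp [paraMat, paraconj_add, paraconj_sub, paraconj_mul, Matrix.mul_apply] <;> ring

lemma paraMat_one (hA : A 1 = 1) (hB : B 1 = 0) : paraMat A B 1 = 1 := by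
  ext i j; fin_cases i <;> fin_cases j <;> simp [paraMat, hA, hB]

lemma paraMat_eq_paraMat_one (h : ∀ i j, IsPolyFun fun z => paraMat A B z i j) {z : ℂ}
    (hz : z ≠ 0) : paraMat A B z = paraMat A B 1 := by
  have hA : IsPolyFun A := h 0 0
  have hB : IsPolyFun B := h 0 1
  have hA' : IsPolyFun (paraconj A) := h 1 1
  have hB' : IsPolyFun (paraconj B) := by
    convert (h 1 0).neg using 1; ext z; simp [paraMat]
  have := hA.eq_apply_one_of_paraconj hA' hz
  have := hB.eq_apply_one_of_paraconj hB' hz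
  have := hA'.eq_apply_one_of_paraconj (by simpa using hA) hz
  have := hB'.eq_apply_one_of_paraconj (by simpa using hB) hz
  ext i j; fin_cases i <;> fin_cases j <;> simp_all [paraMat]

end ParaMat

lemma adjugate_paraMat_mul_paraMat_eq {A B C D : ℂ → ℂ}
    (h : ∀ i j, IsPolyFun fun z => (adjugate (paraMat A B z) * paraMat C D z) i j) {z : ℂ}
    (hz : z ≠ 0) :
    adjugate (paraMat A B z) * paraMat C D z = adjugate (paraMat A B 1) * paraMat C D 1 := by
  simp only [adjugate_paraMat, paraMat_mul_paraMat] at h ⊢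
  exact paraMat_eq_paraMat_one _ _ h hz

lemma paraMat_pEval {N : ℕ} (a b : Fin (N + 1) → ℂ) (z : ℂ) :
    paraMat (pEval a) (pEval b) z = !![pEval a z, pEval b z; -pTilde b z, pTilde a z] := by
  simp [paraMat, paraconj_pEval]

theorem daubechies_corollary5_general (N : ℕ)
    (a b : Fin (N + 1) → ℂ)
    (hunit : ∀ z : ℂ, z ≠ 0 →
      pEval a z * pTilde a z + pEval b z * pTilde b z = 1)
    (g : Fin N → ℂ)
    (hpoly : ∀ i j : Fin 2, IsPolyFun (fun z =>
      ((!![(1 : ℂ), 0; nEval g z, 1] : Matrix (Fin 2) (Fin 2) ℂ) *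
        !![pEval a z, pEval b z; -pTilde b z, pTilde a z]) i j))
    (a' b' : Fin (N + 1) → ℂ)
    (hunit' : ∀ z : ℂ, z ≠ 0 →
      pEval a' z * pTilde a' z + pEval b' z * pTilde b' z = 1)
    (ha'1 : pEval a' 1 = 1) (hb'1 : pEval b' 1 = 0)
    (hpoly' : ∀ i j : Fin 2, IsPolyFun (fun z =>
      ((!![(1 : ℂ), 0; nEval g z, 1] : Matrix (Fin 2) (Fin 2) ℂ) *
        !![pEval a' z, pEval b' z; -pTilde b' z, pTilde a' z]) i j)) :
    (!![pEval a 1, pEval b 1;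
        -(starRingEnd ℂ) (pEval b 1), (starRingEnd ℂ) (pEval a 1)] ∈
      Matrix.unitaryGroup (Fin 2) ℂ) ∧
    (!![pEval a 1, pEval b 1;
        -(starRingEnd ℂ) (pEval b 1), (starRingEnd ℂ) (pEval a 1)]).det = 1 ∧
    ∀ z : ℂ, z ≠ 0 →
      pEval a z = pEval a' z * pEval a 1 + pEval b' z * (-(starRingEnd ℂ) (pEval b 1)) ∧
      pEval b z = pEval a' z * pEval b 1 + pEval b' z * (starRingEnd ℂ) (pEval a 1) := by
  set M := paraMat (pEval a) (pEval b)
  set M' := paraMat (pEval a') (pEval b')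
  simp only [← paraMat_pEval] at hpoly hpoly'
  simp only [← paraconj_pEval] at hunit hunit'
  have hdet' (z : ℂ) (hz : z ≠ 0) : (M' z).det = 1 := by
    rw [det_paraMat]; exact hunit' z hz
  have hV : ∀ i j, IsPolyFun fun z => (adjugate (M' z) * M z) i j := by
    have hL (z : ℂ) : (!![1, 0; nEval g z, 1] : Matrix (Fin 2) (Fin 2) ℂ).det = 1 := by
      simp [det_fin_two_of]
    simpa only [adjugate_mul_mul_mul_cancel (hL _), mem_polyFunSubring] using
      polyFunSubring.matrix_mul_apply_mem (polyFunSubring.adjugate_apply_mem hpoly') hpoly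
  have hfactor (z : ℂ) (hz : z ≠ 0) : M z = M' z * M 1 := calc
    M z = M' z * (adjugate (M' z) * M z) := by
      rw [← Matrix.mul_assoc, mul_adjugate, hdet' z hz, one_smul, Matrix.one_mul]
    _ = M' z * (adjugate (M' 1) * M 1) := by rw [adjugate_paraMat_mul_paraMat_eq hV hz]
    _ = M' z * M 1 := by rw [show M' 1 = 1 from paraMat_one _ _ ha'1 hb'1, adjugate_one,
      Matrix.one_mul]
  have hU := Matrix.mem_specialUnitaryGroup_fin_two (u := pEval a 1) (v := pEval b 1)
    (by simpa using hunit 1 one_ne_zero)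
  refine ⟨(mem_specialUnitaryGroup_iff.mp hU).1, (mem_specialUnitaryGroup_iff.mp hU).2,
    fun z hz => ⟨?_, ?_⟩⟩
  · simpa [M, M', paraMat, Matrix.mul_apply] using congr_fun₂ (hfactor z hz) 0 0
  · simpa [M, M', paraMat, Matrix.mul_apply] using congr_fun₂ (hfactor z hz) 0 1

/-- Corollary 5: if `φ = Π(α,β)` and `(α',β') = ∐(φ)` is the normalized pair, then
`(α,β) = (α',β')·U` where `U = [[α(1),β(1)],[-β̃(1),α̃(1)]]` is unitary of determinant 1. -/
theorem daubechies_corollary5 (N : ℕ) (hN : 1 ≤ N)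
    (a b : Fin (N + 1) → ℂ)
    (hunit : ∀ z : ℂ, z ≠ 0 →
      pEval a z * pTilde a z + pEval b z * pTilde b z = 1)
    (h0 : 0 < ‖pEval a 0‖ + ‖pEval b 0‖)
    (g : Fin N → ℂ)
    (hpoly : ∀ i j : Fin 2, IsPolyFun (fun z =>
      ((!![(1 : ℂ), 0; nEval g z, 1] : Matrix (Fin 2) (Fin 2) ℂ) *
        !![pEval a z, pEval b z; -pTilde b z, pTilde a z]) i j))
    (a' b' : Fin (N + 1) → ℂ)
    (hunit' : ∀ z : ℂ, z ≠ 0 →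
      pEval a' z * pTilde a' z + pEval b' z * pTilde b' z = 1)
    (ha'1 : pEval a' 1 = 1) (hb'1 : pEval b' 1 = 0)
    (hpoly' : ∀ i j : Fin 2, IsPolyFun (fun z =>
      ((!![(1 : ℂ), 0; nEval g z, 1] : Matrix (Fin 2) (Fin 2) ℂ) *
        !![pEval a' z, pEval b' z; -pTilde b' z, pTilde a' z]) i j)) :
    (!![pEval a 1, pEval b 1;
        -(starRingEnd ℂ) (pEval b 1), (starRingEnd ℂ) (pEval a 1)] ∈
      Matrix.unitaryGroup (Fin 2) ℂ) ∧
    (!![pEval a 1, pEval b 1;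
        -(starRingEnd ℂ) (pEval b 1), (starRingEnd ℂ) (pEval a 1)]).det = 1 ∧
    ∀ z : ℂ, z ≠ 0 →
      pEval a z = pEval a' z * pEval a 1 + pEval b' z * (-(starRingEnd ℂ) (pEval b 1)) ∧
      pEval b z = pEval a' z * pEval b 1 + pEval b' z * (starRingEnd ℂ) (pEval a 1) :=
  daubechies_corollary5_general N a b hunit g hpoly a' b' hunit' ha'1 hb'1 hpoly'
end

section
/- Let φ ∈ P^-_N be nonzero and let Θ be the associated (N+1)×(N+1) Hankel matrix and X the solution of (Θ̄Θ + I)X = e₁, Y = Θ̄X̄, giving α(z) = Σ x_k z^k, β(z) = Σ y_k z^k. Then α(z)Φ₂(z) - β(z)Φ₁(z) = c for all z ∈ ℂ\{0}, where Φ₁ = φα - β̃, Φ₂ = φβ + α̃, and c = αα̃ + ββ̃ is the (positive) constant value; in particular the determinant of [[1,0],[φ,1]]·[[α,β],[-β̃,α̃]] equals c everywhere. -/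
open Complex Finset Matrix

/-!
Expanding `α α̃ + β β̃` as a Laurent polynomial, the coefficient of `z ^ m` (`m ≥ 1`) is
`x ⬝ᵥ S_m x̄ + y ⬝ᵥ S_m ȳ`, where `S_m` is the shift by `m`, and the coefficient of `z⁻¹ ^ m` is
its conjugate. A Hankel matrix whose symbol vanishes beyond its size intertwines shifts,
`Θ̄ S_m = S_mᵀ Θ̄`; together with `Θᵀ = Θ`, `ȳ = Θ x` and `Θ̄ Θ x = e₁ - x` this turns
`y ⬝ᵥ S_m ȳ` into `x̄ ⬝ᵥ S_mᵀ (e₁ - x) = - x ⬝ᵥ S_m x̄`, the first row of `S_m` being zero.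
Hence `α α̃ + β β̃` is the constant `x ⬝ᵥ x̄ + y ⬝ᵥ ȳ > 0`, and both determinant identities are
algebraic rearrangements of this one.
-/

open scoped ComplexOrder

def hankelMatrix {α : Type*} (γ : ℕ → α) (n : ℕ) : Matrix (Fin n) (Fin n) α :=
  of fun i j => γ (i + j)

def shiftMatrix {α : Type*} [Zero α] [One α] (n m : ℕ) : Matrix (Fin n) (Fin n) α :=
  of fun i j => if (i : ℕ) = j + m then 1 else 0

variable {R : Type*}

theorem hankelMatrix_isSymm (γ : ℕ → R) (n : ℕ) : (hankelMatrix γ n).IsSymm := by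
  ext i j
  simp [hankelMatrix, add_comm]

theorem Fin.sum_ite_val_eq [AddCommMonoid R] {n : ℕ} {f : ℕ → R} (hf : ∀ k, n ≤ k → f k = 0)
    (a : ℕ) : ∑ k : Fin n, (if (k : ℕ) = a then f k else 0) = f a := by
  rw [Fin.sum_univ_eq_sum_range (fun k => if k = a then f k else 0), sum_ite_eq']
  split_ifs with h
  · rfl
  · exact (hf a (not_lt.1 (mem_range.not.1 h))).symm

theorem hankelMatrix_mul_shiftMatrix [Semiring R] {γ : ℕ → R} {n : ℕ}
    (hγ : ∀ k, n ≤ k → γ k = 0) (m : ℕ) :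
    hankelMatrix γ n * shiftMatrix n m = (shiftMatrix n m)ᵀ * hankelMatrix γ n := by
  ext i j
  simp only [mul_apply, hankelMatrix, shiftMatrix, transpose_apply, of_apply, mul_ite, ite_mul,
    mul_one, one_mul, mul_zero, zero_mul]
  rw [Fin.sum_ite_val_eq (f := fun k => γ (i + k)) (fun k hk => hγ _ (by omega)),
    Fin.sum_ite_val_eq (f := fun k => γ (k + j)) (fun k hk => hγ _ (by omega))]
  congr 1
  ring

theorem vecMul_shiftMatrix_eq_zero [Semiring R] {n m : ℕ} {e : Fin n → R}
    (he : ∀ i : Fin n, m ≤ (i : ℕ) → e i = 0) : e ᵥ* shiftMatrix n m = 0 := by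
  ext j
  simp only [vecMul, dotProduct, Pi.zero_apply]
  refine Finset.sum_eq_zero fun i _ => ?_
  by_cases hi : m ≤ (i : ℕ)
  · simp [he i hi]
  · rw [shiftMatrix, of_apply, if_neg (by omega), mul_zero]

theorem shiftMatrix_map_star [Semiring R] [StarRing R] (n m : ℕ) :
    (shiftMatrix n m : Matrix (Fin n) (Fin n) R).map star = shiftMatrix n m := by
  ext i j
  simp only [shiftMatrix, map_apply, of_apply]
  split_ifs <;> simp

theorem star_mulVec_map_star [CommSemiring R] [StarRing R] {m n : Type*} [Fintype n]
    (M : Matrix m n R) (v : n → R) : star (M.map star *ᵥ star v) = M *ᵥ v := by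
  ext i
  simp [mulVec, dotProduct]

theorem dotProduct_mulVec_star_add_eq_zero {n : Type*} [CommRing R] [StarRing R] [Fintype n]
    [DecidableEq n] {A S : Matrix n n R} {x y e : n → R} (hA : A.IsSymm)
    (hAS : A.map star * S = Sᵀ * A.map star) (hx : (A.map star * A + 1) *ᵥ x = e)
    (he : e ᵥ* S = 0) (hy : y = A.map star *ᵥ star x) :
    x ⬝ᵥ S *ᵥ star x + y ⬝ᵥ S *ᵥ star y = 0 := by
  have hAx : (A.map star * A) *ᵥ x = e - x := by
    rw [← hx, add_mulVec, one_mulVec, add_sub_cancel_right]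
  have hy_eq : y ⬝ᵥ S *ᵥ star y = star x ⬝ᵥ Sᵀ *ᵥ (e - x) := by
    calc y ⬝ᵥ S *ᵥ star y = star x ⬝ᵥ (A.map star)ᵀ *ᵥ S *ᵥ A *ᵥ x := by
          rw [dotProduct_transpose_mulVec, hy, dotProduct_comm, star_mulVec_map_star]
      _ = star x ⬝ᵥ Sᵀ *ᵥ (e - x) := by
          rw [← transpose_map, hA.eq, mulVec_mulVec, mulVec_mulVec, hAS,
            Matrix.mul_assoc, ← mulVec_mulVec, hAx]
  rw [hy_eq, mulVec_sub, dotProduct_sub, dotProduct_transpose_mulVec, dotProduct_mulVec e, he,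
    zero_dotProduct, dotProduct_transpose_mulVec]
  ring

theorem pow_mul_inv_pow_eq_sum_ite {K : Type*} [Field K] {z : K} (hz : z ≠ 0) {n a b : ℕ}
    (ha : a < n) (hb : b < n) :
    z ^ a * z⁻¹ ^ b = (if a = b then 1 else 0) +
      ∑ m ∈ Icc 1 n, ((if a = b + m then z ^ m else 0) + (if b = a + m then z⁻¹ ^ m else 0)) := by
  wlog hba : b ≤ a generalizing a b z
  · have := this (inv_ne_zero hz) hb ha (le_of_not_ge hba)
    rw [inv_inv, if_neg (by omega)] at this
    rw [mul_comm, this, if_neg (by omega)]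
    exact congrArg _ (sum_congr rfl fun m _ => add_comm _ _)
  obtain ⟨d, rfl⟩ := Nat.exists_eq_add_of_le hba
  have hz' : z ^ (b + d) * z⁻¹ ^ b = z ^ d := by
    rw [inv_pow, pow_add, mul_comm (z ^ b), mul_inv_cancel_right₀ (pow_ne_zero b hz)]
  have hnone : ∀ m ∈ Icc 1 n, ¬b = b + d + m := fun m hm => by
    rw [mem_Icc] at hm; omega
  rw [sum_add_distrib, sum_eq_zero fun m hm => if_neg (hnone m hm), add_zero, hz']
  simp only [add_eq_left, add_right_inj, sum_ite_eq, mem_Icc]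
  rcases d with _ | d
  · simp
  · rw [if_neg d.succ_ne_zero, if_pos ⟨d.succ_pos, by omega⟩, zero_add]

/-- The matrix `(z ^ k * z⁻¹ ^ l)ₖₗ`, written diagonal by diagonal. -/
def laurentKernel {K : Type*} [Field K] (z : K) (n : ℕ) : Matrix (Fin n) (Fin n) K :=
  1 + ∑ m ∈ Icc 1 n, (z ^ m • shiftMatrix n m + z⁻¹ ^ m • (shiftMatrix n m)ᵀ)

theorem laurentKernel_apply {K : Type*} [Field K] {z : K} (hz : z ≠ 0) {n : ℕ} (k l : Fin n) :
    laurentKernel z n k l = z ^ (k : ℕ) * z⁻¹ ^ (l : ℕ) := by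
  rw [pow_mul_inv_pow_eq_sum_ite hz k.isLt l.isLt]
  simp [laurentKernel, shiftMatrix, one_apply, Fin.ext_iff, Matrix.sum_apply]

theorem dotProduct_laurentKernel_mulVec_star {K : Type*} [Field K] [StarRing K] (z : K) {n : ℕ}
    (a : Fin n → K) :
    a ⬝ᵥ laurentKernel z n *ᵥ star a = a ⬝ᵥ star a + ∑ m ∈ Icc 1 n,
      (z ^ m * (a ⬝ᵥ shiftMatrix n m *ᵥ star a) +
        z⁻¹ ^ m * star (a ⬝ᵥ shiftMatrix n m *ᵥ star a)) := by
  have hstar (m : ℕ) :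
      a ⬝ᵥ (shiftMatrix n m)ᵀ *ᵥ star a = star (a ⬝ᵥ shiftMatrix n m *ᵥ star a) := by
    rw [← star_dotProduct_star, ← shiftMatrix_map_star n m, star_mulVec_map_star,
      shiftMatrix_map_star, dotProduct_transpose_mulVec, dotProduct_comm]
  simp only [laurentKernel, add_mulVec, one_mulVec, sum_mulVec, smul_mulVec, dotProduct_add,
    dotProduct_sum, dotProduct_smul, smul_eq_mul, hstar]

theorem pEval_mul_pTilde {n : ℕ} (a : Fin (n + 1) → ℂ) {z : ℂ} (hz : z ≠ 0) :
    pEval a z * pTilde a z = a ⬝ᵥ laurentKernel z (n + 1) *ᵥ star a := by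
  rw [pEval, pTilde, sum_mul_sum]
  simp only [dotProduct, mulVec, laurentKernel_apply hz, mul_sum]
  refine sum_congr rfl fun k _ => sum_congr rfl fun l _ => ?_
  simp only [Pi.star_apply, Complex.star_def]
  ring

theorem pEval_mul_pTilde_add_eq {n : ℕ} {x y : Fin (n + 1) → ℂ} {z : ℂ} (hz : z ≠ 0)
    (hxy : ∀ m ∈ Icc 1 (n + 1),
      x ⬝ᵥ shiftMatrix (n + 1) m *ᵥ star x + y ⬝ᵥ shiftMatrix (n + 1) m *ᵥ star y = 0) :
    pEval x z * pTilde x z + pEval y z * pTilde y z = x ⬝ᵥ star x + y ⬝ᵥ star y := by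
  rw [pEval_mul_pTilde x hz, pEval_mul_pTilde y hz, dotProduct_laurentKernel_mulVec_star,
    dotProduct_laurentKernel_mulVec_star, add_add_add_comm, ← sum_add_distrib,
    sum_eq_zero fun m hm => ?_, add_zero]
  have h := hxy m hm
  have h' := congrArg star h
  rw [star_add, star_zero] at h'
  linear_combination z ^ m * h + z⁻¹ ^ m * h'

theorem daubechies_determinant_constant_general (N : ℕ) (γ : ℕ → ℂ)
    (hγtop : ∀ k : ℕ, N < k → γ k = 0)
    (Θ : Matrix (Fin (N + 1)) (Fin (N + 1)) ℂ)
    (hΘ : ∀ i j : Fin (N + 1), Θ i j = γ ((i : ℕ) + (j : ℕ)))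
    (X Y : Fin (N + 1) → ℂ)
    (hX : (Θ.map (starRingEnd ℂ) * Θ + 1).mulVec X =
      fun i => if i = 0 then (1 : ℂ) else 0)
    (hY : Y = (Θ.map (starRingEnd ℂ)).mulVec (fun i => (starRingEnd ℂ) (X i)))
    (φ : ℂ → ℂ) :
    ∃ c : ℝ, 0 < c ∧ ∀ z : ℂ, z ≠ 0 →
      pEval X z * pTilde X z + pEval Y z * pTilde Y z = (c : ℂ) ∧
      pEval X z * (φ z * pEval Y z + pTilde X z) -
        pEval Y z * (φ z * pEval X z - pTilde Y z) = (c : ℂ) ∧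
      ((!![(1 : ℂ), 0; φ z, 1] : Matrix (Fin 2) (Fin 2) ℂ) *
        !![pEval X z, pEval Y z; -pTilde Y z, pTilde X z]).det = (c : ℂ) := by
  obtain rfl : Θ = hankelMatrix γ (N + 1) := Matrix.ext hΘ
  have hcancel : ∀ m ∈ Icc 1 (N + 1),
      X ⬝ᵥ shiftMatrix (N + 1) m *ᵥ star X + Y ⬝ᵥ shiftMatrix (N + 1) m *ᵥ star Y = 0 :=
    fun m hm => dotProduct_mulVec_star_add_eq_zero (hankelMatrix_isSymm γ _)
      (hankelMatrix_mul_shiftMatrix (γ := star ∘ γ) (fun k hk => by simp [hγtop k hk]) m) hX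
      (vecMul_shiftMatrix_eq_zero fun i hi => if_neg fun h => by simp_all) hY
  have hX0 : X ≠ 0 := by
    rintro rfl
    simpa using congrFun hX 0
  obtain ⟨c, hc, hcXY⟩ := RCLike.pos_iff_exists_ofReal.1 <|
    add_pos_of_pos_of_nonneg (dotProduct_self_star_pos_iff.2 hX0) (dotProduct_self_star_nonneg Y)
  refine ⟨c, hc, fun z hz => ?_⟩
  have key := (pEval_mul_pTilde_add_eq hz hcancel).trans hcXY.symm
  refine ⟨key, by linear_combination key, ?_⟩
  rw [det_mul, det_fin_two_of, det_fin_two_of]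
  linear_combination key

/-- With `α, β` constructed from the Hankel system for a nonzero `φ ∈ P⁻_N`, one has
`α Φ₂ - β Φ₁ = c` on `ℂ \ {0}` where `Φ₁ = φα - β̃`, `Φ₂ = φβ + α̃` and
`c = α α̃ + β β̃ > 0`; in particular the determinant of
`[[1,0],[φ,1]]·[[α,β],[-β̃,α̃]]` equals `c` everywhere on `ℂ \ {0}`. -/
theorem daubechies_determinant_constant (N : ℕ) (hN : 1 ≤ N) (γ : ℕ → ℂ)
    (hγ0 : γ 0 = 0) (hγtop : ∀ k : ℕ, N < k → γ k = 0)
    (hγ : ∃ k, 1 ≤ k ∧ k ≤ N ∧ γ k ≠ 0)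
    (Θ : Matrix (Fin (N + 1)) (Fin (N + 1)) ℂ)
    (hΘ : ∀ i j : Fin (N + 1), Θ i j = γ ((i : ℕ) + (j : ℕ)))
    (X Y : Fin (N + 1) → ℂ)
    (hX : (Θ.map (starRingEnd ℂ) * Θ + 1).mulVec X =
      fun i => if i = 0 then (1 : ℂ) else 0)
    (hY : Y = (Θ.map (starRingEnd ℂ)).mulVec (fun i => (starRingEnd ℂ) (X i)))
    (φ : ℂ → ℂ) (hφ : ∀ z : ℂ, φ z = ∑ k ∈ Finset.Icc 1 N, γ k * z⁻¹ ^ k) :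
    ∃ c : ℝ, 0 < c ∧ ∀ z : ℂ, z ≠ 0 →
      pEval X z * pTilde X z + pEval Y z * pTilde Y z = (c : ℂ) ∧
      pEval X z * (φ z * pEval Y z + pTilde X z) -
        pEval Y z * (φ z * pEval X z - pTilde Y z) = (c : ℂ) ∧
      ((!![(1 : ℂ), 0; φ z, 1] : Matrix (Fin 2) (Fin 2) ℂ) *
        !![pEval X z, pEval Y z; -pTilde Y z, pTilde X z]).det = (c : ℂ) :=
  daubechies_determinant_constant_general N γ hγtop Θ hΘ X Y hX hY φ
end
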